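/- arXiv:1803.02911 — 6 statements merged into one kernel-verified Lean document; each statement's English description precedes it below -/
import Mathlib

section
/- Let M be an L^0(m)-module with the locality property and the glueing property. Then M admits a dimensional decomposition: there exists a Borel partition (E_n)_{n∈ℕ∪{∞}} of X such that M has dimension n on E_n for every n∈ℕ with m(E_n)>0, and M does not admit any finite local basis on any positive-measure Borel subset of E_∞. -/
open MeasureTheory

namespace L0SerreSwan

variable {X : Type*} [MeasurableSpace X]

/-- The commutative ring structure on `L⁰(m)`, the space of (m-a.e. equivalence classes
of) real-valued Borel functions, with pointwise operations. -/
noncomputable instance L0.instCommRing {μ : Measure X} : CommRing (X →ₘ[μ] ℝ) :=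
  { (inferInstance : AddCommGroup (X →ₘ[μ] ℝ)),
    (inferInstance : CommMonoid (X →ₘ[μ] ℝ)) with
    left_distrib := fun f g h => by
      refine AEEqFun.induction_on₃ f g h fun f hf g hg h hh => ?_
      simp only [AEEqFun.mk_add_mk, AEEqFun.mk_mul_mk]
      exact AEEqFun.mk_eq_mk.2 (Filter.Eventually.of_forall fun x => mul_add _ _ _)
    right_distrib := fun f g h => by
      refine AEEqFun.induction_on₃ f g h fun f hf g hg h hh => ?_
      simp only [AEEqFun.mk_add_mk, AEEqFun.mk_mul_mk]
      exact AEEqFun.mk_eq_mk.2 (Filter.Eventually.of_forall fun x => add_mul _ _ _)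
    zero_mul := fun f => by
      refine AEEqFun.induction_on f fun f hf => ?_
      have h0 : (0 : X →ₘ[μ] ℝ) = AEEqFun.mk (fun _ => (0:ℝ)) aestronglyMeasurable_const := rfl
      rw [h0, AEEqFun.mk_mul_mk]
      exact AEEqFun.mk_eq_mk.2 (Filter.Eventually.of_forall fun x => zero_mul _)
    mul_zero := fun f => by
      refine AEEqFun.induction_on f fun f hf => ?_
      have h0 : (0 : X →ₘ[μ] ℝ) = AEEqFun.mk (fun _ => (0:ℝ)) aestronglyMeasurable_const := rfl
      rw [h0, AEEqFun.mk_mul_mk]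
      exact AEEqFun.mk_eq_mk.2 (Filter.Eventually.of_forall fun x => mul_zero _) }

/-- `χ_A`, the (class of the) indicator function of a Borel set `A`, as an element of `L⁰(m)`. -/
noncomputable def chi (μ : Measure X) (A : Set X) (hA : MeasurableSet A) : X →ₘ[μ] ℝ :=
  AEEqFun.mk (A.indicator fun _ => (1:ℝ)) ((measurable_const.indicator hA).aestronglyMeasurable)

/-- `v_1, …, v_n` form a local basis for the `L⁰(m)`-module `M` on the Borel set `A`:
the elements `χ_A • v_i` generate `χ_A • M` over `L⁰(m|_A)` and are independent. -/
def LocalBasisOn (μ : Measure X) {M : Type*} [AddCommGroup M] [Module (X →ₘ[μ] ℝ) M]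
    (A : Set X) (hA : MeasurableSet A) {n : ℕ} (v : Fin n → M) : Prop :=
  (∀ w : M, ∃ f : Fin n → (X →ₘ[μ] ℝ),
      chi μ A hA • w = ∑ i, (chi μ A hA * f i) • v i) ∧
  (∀ f : Fin n → (X →ₘ[μ] ℝ),
      (∑ i, (chi μ A hA * f i) • v i) = 0 → ∀ i, chi μ A hA * f i = 0)

/-- The locality property of an `L⁰(m)`-module `M`: if `χ_{A_n} • v = 0` for all `n`
then `χ_{⋃ₙ A_n} • v = 0`. -/
def Locality (μ : Measure X) (M : Type*) [AddCommGroup M] [Module (X →ₘ[μ] ℝ) M] : Prop :=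
  ∀ (v : M) (A : ℕ → Set X) (hA : ∀ n, MeasurableSet (A n)),
    (∀ n, chi μ (A n) (hA n) • v = 0) →
    chi μ (⋃ n, A n) (MeasurableSet.iUnion hA) • v = 0

/-- The glueing property of an `L⁰(m)`-module `M`: given pairwise disjoint Borel sets
`A_n` and elements `v_n ∈ M`, there is `v ∈ M` with `χ_{A_n} • v = χ_{A_n} • v_n` for all `n`. -/
def Glueing (μ : Measure X) (M : Type*) [AddCommGroup M] [Module (X →ₘ[μ] ℝ) M] : Prop :=
  ∀ (v : ℕ → M) (A : ℕ → Set X) (hA : ∀ n, MeasurableSet (A n)),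
    (∀ n k, n ≠ k → Disjoint (A n) (A k)) →
    ∃ w : M, ∀ n, chi μ (A n) (hA n) • w = chi μ (A n) (hA n) • v n

/-- `(E_n)_{n∈ℕ}` together with `E_∞` is a dimensional decomposition of the
`L⁰(m)`-module `M`: it is a Borel partition of `X`, `M` has dimension `n` on each `E_n`
of positive measure, and `M` admits no finite local basis on any positive-measure
Borel subset of `E_∞`. -/
def DimDecomp (μ : Measure X) (M : Type*) [AddCommGroup M] [Module (X →ₘ[μ] ℝ) M]
    (E : ℕ → Set X) (hE : ∀ n, MeasurableSet (E n))
    (Einf : Set X) (hEinf : MeasurableSet Einf) : Prop :=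
  (∀ n k, n ≠ k → Disjoint (E n) (E k)) ∧
  (∀ n, Disjoint (E n) Einf) ∧
  ((⋃ n, E n) ∪ Einf = Set.univ) ∧
  (∀ n, 0 < μ (E n) → ∃ v : Fin n → M, LocalBasisOn μ (E n) (hE n) v) ∧
  (∀ (A : Set X) (hA : MeasurableSet A), A ⊆ Einf → 0 < μ A →
      ¬ ∃ (n : ℕ) (v : Fin n → M), LocalBasisOn μ A hA v)

/-!
The Borel sets on which `M` has an `n`-element local basis are closed under Borel subsets and
under countable unions: on a disjoint union, glue the bases (and the coefficients) piece by
piece; generation on the union then follows from locality of `M`, independence from locality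
of `L⁰(m)`. Measuring with a finite `ν ≫ m`, a set `B_n` of this class of maximal `ν`-measure
is maximal up to null sets. Now `E_n := B_n \ ⋃_{k<n} B_k` and `E_∞ := X \ ⋃_n B_n` work:
a local basis with `n` elements on a positive-measure subset of `E_∞` would enlarge `B_n`.
-/

open Function

section IndicatorCalculus

variable {μ : Measure X} {A B : Set X}

theorem coeFn_chi (hA : MeasurableSet A) :
    chi μ A hA =ᵐ[μ] A.indicator fun _ => (1 : ℝ) :=
  AEEqFun.coeFn_mk _ _

theorem chi_empty : chi μ (∅ : Set X) MeasurableSet.empty = 0 := by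
  simp only [chi, Set.indicator_empty]
  rfl

theorem chi_mul_of_subset (hA : MeasurableSet A) (hB : MeasurableSet B) (hBA : B ⊆ A) :
    chi μ B hB * chi μ A hA = chi μ B hB := by
  rw [chi, chi, AEEqFun.mk_mul_mk]
  refine AEEqFun.mk_eq_mk.2 (.of_forall fun x => ?_)
  by_cases hx : x ∈ B
  · simp [hx, hBA hx]
  · simp [hx]

theorem chi_mul_eq_chi_mul_iff (hA : MeasurableSet A) (f g : X →ₘ[μ] ℝ) :
    chi μ A hA * f = chi μ A hA * g ↔ ∀ᵐ x ∂μ, x ∈ A → f x = g x := by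
  rw [AEEqFun.ext_iff]
  refine Filter.eventually_congr ?_
  filter_upwards [AEEqFun.coeFn_mul (chi μ A hA) f, AEEqFun.coeFn_mul (chi μ A hA) g,
    coeFn_chi hA] with x hf hg hχ
  rw [hf, hg, Pi.mul_apply, Pi.mul_apply, hχ]
  by_cases hx : x ∈ A <;> simp [hx]

theorem locality_self : Locality μ (X →ₘ[μ] ℝ) := by
  intro g A hA h
  have hA0 : ∀ k, ∀ᵐ x ∂μ, x ∈ A k → g x = (0 : X →ₘ[μ] ℝ) x := fun k =>
    (chi_mul_eq_chi_mul_iff (hA k) g 0).1 (by simpa using h k)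
  rw [smul_eq_mul, ← mul_zero (chi μ _ (.iUnion hA)), chi_mul_eq_chi_mul_iff (.iUnion hA)]
  filter_upwards [ae_all_iff.2 hA0] with x hx hxA
  obtain ⟨k, hk⟩ := Set.mem_iUnion.1 hxA
  exact hx k hk

theorem glueing_self : Glueing μ (X →ₘ[μ] ℝ) := by
  intro f A hA hdisj
  set u : ℕ → X → ℝ := fun k => (A k).indicator (f k)
  have hasSum_of_mem : ∀ k x, x ∈ A k → HasSum (fun j => u j x) (f k x) := fun k x hx => by
    simpa [u, Set.indicator_of_mem hx] using hasSum_single (f := fun j => u j x) k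
      fun j hj => Set.indicator_of_notMem (Set.disjoint_right.1 (hdisj j k hj) hx) _
  have summable : ∀ x, Summable fun j => u j x := fun x => by
    by_cases hx : ∃ k, x ∈ A k
    · obtain ⟨k, hk⟩ := hx
      exact (hasSum_of_mem k x hk).summable
    · push Not at hx
      simp [u, Set.indicator_of_notMem (hx _)]
  have hG : Measurable fun x => ∑' j, u j x :=
    measurable_of_tendsto_metrizable
      (fun n => Finset.measurable_sum _ fun k _ => (f k).measurable.indicator (hA k))
      (tendsto_pi_nhds.2 fun x => (summable x).hasSum.tendsto_sum_nat)
  refine ⟨AEEqFun.mk _ hG.aestronglyMeasurable, fun k => ?_⟩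
  rw [smul_eq_mul, smul_eq_mul, chi_mul_eq_chi_mul_iff]
  filter_upwards [AEEqFun.coeFn_mk _ hG.aestronglyMeasurable] with x hx hxA
  rw [hx, (hasSum_of_mem k x hxA).tsum_eq]

end IndicatorCalculus

theorem smul_sum_smul_eq_smul_sum_smul {R N ι : Type*} [CommSemiring R] [AddCommMonoid N]
    [Module R N] [Fintype ι] {c : R} {f g : ι → R} {v w : ι → N}
    (hfg : ∀ i, c * f i = c * g i) (hvw : ∀ i, c • v i = c • w i) :
    c • ∑ i, f i • v i = c • ∑ i, g i • w i := by
  simp only [Finset.smul_sum, smul_smul, hfg]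
  refine Finset.sum_congr rfl fun i _ => ?_
  rw [mul_comm, mul_smul, hvw, ← mul_smul]

section LocalBases

variable {μ : Measure X} {M : Type*} [AddCommGroup M] [Module (X →ₘ[μ] ℝ) M] {n : ℕ}

theorem Locality.chi_iUnion_smul_eq (hloc : Locality μ M) {A : ℕ → Set X}
    (hA : ∀ k, MeasurableSet (A k)) {x y : M}
    (h : ∀ k, chi μ (A k) (hA k) • x = chi μ (A k) (hA k) • y) :
    chi μ (⋃ k, A k) (.iUnion hA) • x = chi μ (⋃ k, A k) (.iUnion hA) • y := by
  rw [← sub_eq_zero, ← smul_sub]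
  exact hloc _ A hA fun k => by rw [smul_sub, h k, sub_self]

theorem localBasisOn_iff {A : Set X} (hA : MeasurableSet A) (v : Fin n → M) :
    LocalBasisOn μ A hA v ↔
      (∀ w : M, ∃ f : Fin n → (X →ₘ[μ] ℝ), chi μ A hA • w = chi μ A hA • ∑ i, f i • v i) ∧
      ∀ f : Fin n → (X →ₘ[μ] ℝ), chi μ A hA • ∑ i, f i • v i = 0 → ∀ i, chi μ A hA * f i = 0 := by
  simp only [LocalBasisOn, Finset.smul_sum, mul_smul]

theorem localBasisOn_empty (v : Fin n → M) : LocalBasisOn μ ∅ .empty v := by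
  simp [localBasisOn_iff, chi_empty]

theorem LocalBasisOn.mono {A B : Set X} (hA : MeasurableSet A) (hB : MeasurableSet B)
    (hBA : B ⊆ A) {v : Fin n → M} (h : LocalBasisOn μ A hA v) : LocalBasisOn μ B hB v := by
  have hχ := chi_mul_of_subset (μ := μ) hA hB hBA
  rw [localBasisOn_iff] at h ⊢
  refine ⟨fun w => ?_, fun f hf i => ?_⟩
  · obtain ⟨f, hf⟩ := h.1 w
    exact ⟨f, by rw [← hχ, mul_smul, mul_smul, hf]⟩
  · have hA0 : chi μ A hA • ∑ j, (chi μ B hB * f j) • v j = 0 := by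
      simp only [mul_smul, ← Finset.smul_sum, hf, smul_zero]
    simpa [← mul_assoc, mul_comm (chi μ A hA) (chi μ B hB), hχ] using h.2 _ hA0 i

theorem localBasisOn_iUnion (hloc : Locality μ M) (hglue : Glueing μ M)
    {A : ℕ → Set X} (hA : ∀ k, MeasurableSet (A k)) (hdisj : Pairwise (Disjoint on A))
    {v : ℕ → Fin n → M} (hv : ∀ k, LocalBasisOn μ (A k) (hA k) (v k)) :
    ∃ w : Fin n → M, LocalBasisOn μ (⋃ k, A k) (.iUnion hA) w := by
  choose w hw using fun i => hglue (fun k => v k i) A hA hdisj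
  have hsub : ∀ k, chi μ (A k) (hA k) * chi μ (⋃ k, A k) (.iUnion hA) = chi μ (A k) (hA k) :=
    fun k => chi_mul_of_subset _ _ (Set.subset_iUnion A k)
  simp only [localBasisOn_iff] at hv ⊢
  refine ⟨w, fun z => ?_, fun f hf i => ?_⟩
  · choose F hF using fun k => (hv k).1 z
    choose f hf using fun i => glueing_self (fun k => F k i) A hA hdisj
    refine ⟨f, hloc.chi_iUnion_smul_eq hA fun k => ?_⟩
    rw [hF k]
    exact smul_sum_smul_eq_smul_sum_smul (fun i => (hf i k).symm) (fun i => (hw i k).symm)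
  · refine (locality_self.chi_iUnion_smul_eq hA (x := f i) (y := 0) fun k => ?_).trans
      (smul_zero _)
    rw [smul_zero, smul_eq_mul]
    refine (hv k).2 f ?_ i
    rw [smul_sum_smul_eq_smul_sum_smul (fun _ => rfl) (fun i => (hw i k).symm), ← hsub k,
      mul_smul, hf, smul_zero]

def HasDimOn (μ : Measure X) (M : Type*) [AddCommGroup M] [Module (X →ₘ[μ] ℝ) M]
    (n : ℕ) (A : Set X) : Prop :=
  ∃ (hA : MeasurableSet A) (v : Fin n → M), LocalBasisOn μ A hA v

theorem HasDimOn.measurableSet {A : Set X} (h : HasDimOn μ M n A) : MeasurableSet A := h.1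

theorem hasDimOn_empty (n : ℕ) : HasDimOn μ M n ∅ :=
  ⟨.empty, 0, localBasisOn_empty 0⟩

theorem HasDimOn.mono {A B : Set X} (h : HasDimOn μ M n A) (hBA : B ⊆ A)
    (hB : MeasurableSet B) : HasDimOn μ M n B :=
  let ⟨hA, v, hv⟩ := h
  ⟨hB, v, hv.mono hA hB hBA⟩

theorem HasDimOn.iUnion (hloc : Locality μ M) (hglue : Glueing μ M) {A : ℕ → Set X}
    (h : ∀ k, HasDimOn μ M n (A k)) : HasDimOn μ M n (⋃ k, A k) := by
  have hD : ∀ k, MeasurableSet (disjointed A k) := .disjointed fun k => (h k).measurableSet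
  choose v hv using fun k => ((h k).mono (disjointed_subset A k) (hD k)).2
  obtain ⟨w, hw⟩ := localBasisOn_iUnion hloc hglue hD (disjoint_disjointed A) hv
  rw [← iUnion_disjointed]
  exact ⟨_, w, hw⟩

end LocalBases

theorem exists_forall_disjoint_measure_eq_zero (μ : Measure X) [SFinite μ]
    {P : Set X → Prop} (h_empty : P ∅) (h_meas : ∀ A, P A → MeasurableSet A)
    (h_iUnion : ∀ A : ℕ → Set X, (∀ k, P (A k)) → P (⋃ k, A k)) :
    ∃ B, P B ∧ ∀ A, P A → Disjoint A B → μ A = 0 := by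
  obtain ⟨ν, _, hμν, -⟩ := exists_isFiniteMeasure_absolutelyContinuous μ
  obtain ⟨u, -, hu, huS⟩ := exists_seq_tendsto_sSup (S := ν '' {A | P A})
    ⟨_, ∅, h_empty, rfl⟩ (OrderTop.bddAbove _)
  choose A hPA hνA using huS
  have hPB := h_iUnion A hPA
  have hνB : ν (⋃ k, A k) = sSup (ν '' {A | P A}) :=
    le_antisymm (le_sSup ⟨_, hPB, rfl⟩)
      (le_of_tendsto' hu fun k => hνA k ▸ measure_mono (Set.subset_iUnion A k))
  refine ⟨_, hPB, fun A' hPA' hdisj => hμν ?_⟩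
  have hPunion : P (A' ∪ ⋃ k, A k) := by
    -- `C` enumerates `A', A 0, A 1, …`
    let C : ℕ → Set X := fun k => Nat.rec A' (fun k _ => A k) k
    have hC : A' ∪ ⋃ k, A k = ⋃ k, C k := Set.union_iUnion_nat_succ C
    rw [hC]
    exact h_iUnion C fun k => by cases k; exacts [hPA', hPA _]
  have hle : ν A' + ν (⋃ k, A k) ≤ 0 + ν (⋃ k, A k) := by
    rw [← measure_union hdisj (.iUnion fun k => h_meas _ (hPA k)), zero_add, hνB]
    exact le_sSup ⟨_, hPunion, rfl⟩
  exact nonpos_iff_eq_zero.1 (ENNReal.le_of_add_le_add_right (measure_ne_top ν _) hle)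

theorem dimDecomp_disjointed {μ : Measure X} {M : Type*} [AddCommGroup M]
    [Module (X →ₘ[μ] ℝ) M] {B : ℕ → Set X} (hB : ∀ n, HasDimOn μ M n (B n))
    (hB_max : ∀ n A, HasDimOn μ M n A → Disjoint A (B n) → μ A = 0) :
    DimDecomp μ M (disjointed B) (.disjointed fun n => (hB n).measurableSet)
      (⋃ n, B n)ᶜ (MeasurableSet.iUnion fun n => (hB n).measurableSet).compl := by
  refine ⟨fun _ _ h => disjoint_disjointed B h, fun n => ?_,
    by rw [iUnion_disjointed, Set.union_compl_self], fun n _ => ?_, ?_⟩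
  · exact disjoint_compl_right.mono_left ((disjointed_subset B n).trans (Set.subset_iUnion B n))
  · exact ((hB n).mono (disjointed_subset B n)
      (.disjointed (fun n => (hB n).measurableSet) n)).2
  · rintro A hA hA_sub hA_pos ⟨n, v, hv⟩
    exact hA_pos.ne' (hB_max n A ⟨hA, v, hv⟩ (disjoint_compl_left.mono hA_sub
      (Set.subset_iUnion B n)))

theorem exists_dimensional_decomposition_general
    {X : Type*} [MetricSpace X] [SecondCountableTopology X]
    [MeasurableSpace X]
    (μ : Measure X) [IsLocallyFiniteMeasure μ]
    (M : Type*) [AddCommGroup M] [Module (X →ₘ[μ] ℝ) M]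
    (hloc : Locality μ M) (hglue : Glueing μ M) :
    ∃ (E : ℕ → Set X) (hE : ∀ n, MeasurableSet (E n))
      (Einf : Set X) (hEinf : MeasurableSet Einf),
      DimDecomp μ M E hE Einf hEinf := by
  choose B hB hB_max using fun n => exists_forall_disjoint_measure_eq_zero μ
    (hasDimOn_empty (M := M) n) (fun _ h => h.measurableSet) fun _ h => .iUnion hloc hglue h
  exact ⟨_, _, _, _, dimDecomp_disjointed hB hB_max⟩

/-- **Existence of the dimensional decomposition.** Let `M` be an `L⁰(m)`-module with
the locality property and the glueing property, over a metric measure space `(X,d,m)`.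
Then `M` admits a dimensional decomposition `(E_n)_{n ∈ ℕ ∪ {∞}}`. -/
theorem exists_dimensional_decomposition
    {X : Type*} [MetricSpace X] [CompleteSpace X] [SecondCountableTopology X]
    [MeasurableSpace X] [BorelSpace X]
    (μ : Measure X) [IsLocallyFiniteMeasure μ] (hμ : μ ≠ 0)
    (M : Type*) [AddCommGroup M] [Module (X →ₘ[μ] ℝ) M]
    (hloc : Locality μ M) (hglue : Glueing μ M) :
    ∃ (E : ℕ → Set X) (hE : ∀ n, MeasurableSet (E n))
      (Einf : Set X) (hEinf : MeasurableSet Einf),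
      DimDecomp μ M E hE Einf hEinf :=
  exists_dimensional_decomposition_general μ M hloc hglue

end L0SerreSwan
end

section
/- A dimensional decomposition of an L^0(m)-module M, if it exists, is unique up to m-negligible sets: if (E_n) and (F_n), n ∈ ℕ∪{∞}, are both dimensional decompositions of M, then m(E_n Δ F_n) = 0 for every n. -/
open MeasureTheory

section Alg

variable {R : Type*} [CommRing R] {M : Type*} [AddCommGroup M] [Module R M]

/-- One direction of the matrix identity coming from two local bases. -/
lemma matrix_rel (a : R)
    {n k : ℕ} (v : Fin n → M) (u : Fin k → M)
    (g : Fin k → Fin n → R) (hg : ∀ j, a • u j = ∑ i, (a * g j i) • v i)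
    (h : Fin n → Fin k → R) (hh : ∀ i, a • v i = ∑ j, (a * h i j) • u j)
    (hind : ∀ f : Fin n → R, (∑ i, (a * f i) • v i) = 0 → ∀ i, a * f i = 0) :
    ∀ i l, a * (∑ j, h i j * g j l) = a * (if l = i then 1 else 0) := by
  intro i l
  have key : a • v i = ∑ l, (a * (∑ j, h i j * g j l)) • v l := by
    calc a • v i = ∑ j, (a * h i j) • u j := hh i
      _ = ∑ j, (h i j) • (a • u j) := by
          refine Finset.sum_congr rfl fun j _ => ?_
          rw [mul_comm, mul_smul]
      _ = ∑ j, (h i j) • (∑ l, (a * g j l) • v l) := by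
          refine Finset.sum_congr rfl fun j _ => by rw [hg j]
      _ = ∑ j, ∑ l, (h i j * (a * g j l)) • v l := by
          refine Finset.sum_congr rfl fun j _ => ?_
          rw [Finset.smul_sum]
          exact Finset.sum_congr rfl fun l _ => (smul_smul _ _ _)
      _ = ∑ l, ∑ j, (h i j * (a * g j l)) • v l := Finset.sum_comm
      _ = ∑ l, (a * (∑ j, h i j * g j l)) • v l := by
          refine Finset.sum_congr rfl fun l _ => ?_
          rw [← Finset.sum_smul]
          congr 1
          rw [Finset.mul_sum]
          exact Finset.sum_congr rfl fun j _ => by ring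
  have triv : a • v i = ∑ l, (a * (if l = i then 1 else 0)) • v l := by
    simp [mul_ite, ite_smul]
  have hz : (∑ l, (a * ((∑ j, h i j * g j l) - (if l = i then 1 else 0))) • v l) = 0 := by
    have : (∑ l, (a * ((∑ j, h i j * g j l) - (if l = i then 1 else 0))) • v l)
        = (∑ l, (a * (∑ j, h i j * g j l)) • v l)
          - (∑ l, (a * (if l = i then 1 else 0)) • v l) := by
      rw [← Finset.sum_sub_distrib]
      refine Finset.sum_congr rfl fun l _ => ?_
      rw [mul_sub, sub_smul]
    rw [this, ← key, ← triv, sub_self]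
  have := hind _ hz l
  rw [mul_sub, sub_eq_zero] at this
  exact this

lemma rank_unique_alg (a : R) (haa : a * a = a) (hane : a ≠ 0)
    {n k : ℕ} (v : Fin n → M) (u : Fin k → M)
    (hv1 : ∀ w : M, ∃ f : Fin n → R, a • w = ∑ i, (a * f i) • v i)
    (hv2 : ∀ f : Fin n → R, (∑ i, (a * f i) • v i) = 0 → ∀ i, a * f i = 0)
    (hu1 : ∀ w : M, ∃ f : Fin k → R, a • w = ∑ j, (a * f j) • u j)
    (hu2 : ∀ f : Fin k → R, (∑ j, (a * f j) • u j) = 0 → ∀ j, a * f j = 0) :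
    n = k := by
  choose g hg using fun j => hv1 (u j)
  choose h hh using fun i => hu1 (v i)
  have rel1 := matrix_rel a v u g hg h hh hv2
  have rel2 := matrix_rel a u v h hh g hg hu2
  set J : Ideal R := Ideal.span {1 - a} with hJ
  have hJne : J ≠ ⊤ := by
    intro htop
    have : (1 : R) ∈ J := htop ▸ Submodule.mem_top
    obtain ⟨c, hc⟩ := Ideal.mem_span_singleton'.1 this
    apply hane
    have : a * (c * (1 - a)) = a * 1 := by rw [hc]
    calc a = a * 1 := (mul_one a).symm
      _ = a * (c * (1 - a)) := by rw [hc]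
      _ = c * (a - a * a) := by ring
      _ = 0 := by rw [haa, sub_self, mul_zero]
  haveI : Nontrivial (R ⧸ J) := Ideal.Quotient.nontrivial_iff.mpr hJne
  let π : R →+* R ⧸ J := Ideal.Quotient.mk J
  have hπa : π a = 1 := by
    have : π (1 - a) = 0 :=
      (Ideal.Quotient.eq_zero_iff_mem).2 (Ideal.mem_span_singleton_self _)
    rw [map_sub, map_one, sub_eq_zero] at this
    exact this.symm
  have entry : ∀ (p q : ℕ) (h' : Fin p → Fin q → R) (g' : Fin q → Fin p → R)
      (rel : ∀ i l, a * (∑ j, h' i j * g' j l) = a * (if l = i then 1 else 0)),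
      ∀ i l, (∑ j, π (h' i j) * π (g' j l)) = if i = l then 1 else 0 := by
    intro p q h' g' rel i l
    have : π (a * (∑ j, h' i j * g' j l)) = π (a * (if l = i then 1 else 0)) := by
      rw [rel]
    rw [map_mul, map_mul, hπa, one_mul, one_mul, map_sum] at this
    simp only [map_mul] at this
    rw [this]
    by_cases hil : l = i
    · subst hil; simp
    · rw [if_neg hil, if_neg fun hh => hil hh.symm]; simp
  let Hm : Matrix (Fin n) (Fin k) (R ⧸ J) := fun i j => π (h i j)
  let Gm : Matrix (Fin k) (Fin n) (R ⧸ J) := fun j i => π (g j i)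
  have h1 : Hm * Gm = 1 := by
    ext i l
    rw [Matrix.mul_apply, Matrix.one_apply]
    exact entry n k h g rel1 i l
  have h2 : Gm * Hm = 1 := by
    ext j l
    rw [Matrix.mul_apply, Matrix.one_apply]
    exact entry k n g h rel2 j l
  have := Matrix.square_of_invertible Hm Gm h1 h2
  simpa using this

end Alg

namespace L0SerreSwan

variable {X : Type*} [MeasurableSpace X]

variable {μ : Measure X}

lemma chi_mul_chi {A B : Set X} (hA : MeasurableSet A) (hB : MeasurableSet B) :
    chi μ A hA * chi μ B hB = chi μ (A ∩ B) (hA.inter hB) := by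
  show AEEqFun.mk _ _ * AEEqFun.mk _ _ = _
  rw [AEEqFun.mk_mul_mk]
  refine AEEqFun.mk_eq_mk.2 (Filter.Eventually.of_forall fun x => ?_)
  by_cases hx : x ∈ A <;> by_cases hx' : x ∈ B <;>
    simp [Set.indicator_apply, hx, hx']

lemma chi_congr {A B : Set X} (hA : MeasurableSet A) (hB : MeasurableSet B)
    (h : A = B) : chi μ A hA = chi μ B hB := by subst h; rfl

lemma chi_mul_self {A : Set X} (hA : MeasurableSet A) :
    chi μ A hA * chi μ A hA = chi μ A hA := by
  rw [chi_mul_chi]; exact chi_congr _ _ (Set.inter_self A)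

lemma chi_ne_zero {A : Set X} (hA : MeasurableSet A) (h : 0 < μ A) :
    chi μ A hA ≠ 0 := by
  intro hz
  have h0 : (0 : X →ₘ[μ] ℝ) = AEEqFun.mk (fun _ => (0:ℝ)) aestronglyMeasurable_const := rfl
  rw [chi, h0, AEEqFun.mk_eq_mk] at hz
  have hμ : μ A = 0 := by
    have hset : {x | ¬ A.indicator (fun _ => (1:ℝ)) x = (fun _ => (0:ℝ)) x} = A := by
      ext x
      by_cases hx : x ∈ A <;> simp [Set.indicator_apply, hx]
    have h2 := hz
    rw [Filter.EventuallyEq, Filter.eventually_iff, mem_ae_iff] at h2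
    rwa [← hset]
  exact absurd hμ (ne_of_gt h)

lemma localBasisOn_mono {M : Type*} [AddCommGroup M] [Module (X →ₘ[μ] ℝ) M]
    {A B : Set X} (hA : MeasurableSet A) (hB : MeasurableSet B) (hBA : B ⊆ A)
    {n : ℕ} {v : Fin n → M} (h : LocalBasisOn μ A hA v) : LocalBasisOn μ B hB v := by
  set a := chi μ A hA with ha
  set b := chi μ B hB with hb
  have hab : a * b = b := by
    rw [ha, hb, chi_mul_chi]
    exact chi_congr _ _ (Set.inter_eq_self_of_subset_right hBA)
  constructor
  · intro w
    obtain ⟨f, hf⟩ := h.1 w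
    refine ⟨fun i => a * f i, ?_⟩
    calc b • w = (b * a) • w := by rw [mul_comm, hab]
      _ = b • (a • w) := by rw [mul_smul]
      _ = b • (∑ i, (a * f i) • v i) := by rw [hf]
      _ = ∑ i, (b * (a * f i)) • v i := by
          rw [Finset.smul_sum]
          exact Finset.sum_congr rfl fun i _ => smul_smul _ _ _
  · intro f hf i
    have h0 : (∑ i, (a * (b * f i)) • v i) = 0 := by
      have : ∀ i, a * (b * f i) = b * f i := fun i => by rw [← mul_assoc, hab]
      rw [Finset.sum_congr rfl fun i _ => by rw [this i]]
      exact hf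
    have := h.2 (fun i => b * f i) h0 i
    rwa [← mul_assoc, hab] at this

lemma localBasisOn_rank_eq {M : Type*} [AddCommGroup M] [Module (X →ₘ[μ] ℝ) M]
    {A : Set X} (hA : MeasurableSet A) (hpos : 0 < μ A)
    {n k : ℕ} {v : Fin n → M} {u : Fin k → M}
    (hv : LocalBasisOn μ A hA v) (hu : LocalBasisOn μ A hA u) : n = k :=
  rank_unique_alg (chi μ A hA) (chi_mul_self hA) (chi_ne_zero hA hpos) v u
    hv.1 hv.2 hu.1 hu.2

/-- **Uniqueness of the dimensional decomposition.** If `(E_n, E_∞)` and `(F_n, F_∞)` are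
both dimensional decompositions of an `L⁰(m)`-module `M`, then `m(E_n Δ F_n) = 0` for
every `n ∈ ℕ ∪ {∞}`. -/
theorem dimensional_decomposition_unique
    {X : Type*} [MetricSpace X] [CompleteSpace X] [SecondCountableTopology X]
    [MeasurableSpace X] [BorelSpace X]
    (μ : Measure X) [IsLocallyFiniteMeasure μ] (hμ : μ ≠ 0)
    (M : Type*) [AddCommGroup M] [Module (X →ₘ[μ] ℝ) M]
    (E F : ℕ → Set X) (hE : ∀ n, MeasurableSet (E n)) (hF : ∀ n, MeasurableSet (F n))
    (Einf Finf : Set X) (hEinf : MeasurableSet Einf) (hFinf : MeasurableSet Finf)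
    (hdE : DimDecomp μ M E hE Einf hEinf) (hdF : DimDecomp μ M F hF Finf hFinf) :
    (∀ n, μ (symmDiff (E n) (F n)) = 0) ∧ μ (symmDiff Einf Finf) = 0 := by
  obtain ⟨hEdisj, hEinfdisj, hEcover, hEbasis, hEnone⟩ := hdE
  obtain ⟨hFdisj, hFinfdisj, hFcover, hFbasis, hFnone⟩ := hdF
  -- cross intersections of different finite dimensions are null
  have inter_null : ∀ n k, n ≠ k → μ (E n ∩ F k) = 0 := by
    intro n k hnk
    by_contra hne
    have hpos : 0 < μ (E n ∩ F k) := pos_iff_ne_zero.2 hne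
    have hposE : 0 < μ (E n) := lt_of_lt_of_le hpos (measure_mono Set.inter_subset_left)
    have hposF : 0 < μ (F k) := lt_of_lt_of_le hpos (measure_mono Set.inter_subset_right)
    obtain ⟨v, hv⟩ := hEbasis n hposE
    obtain ⟨u, hu⟩ := hFbasis k hposF
    have hAm : MeasurableSet (E n ∩ F k) := (hE n).inter (hF k)
    have hv' := localBasisOn_mono (hE n) hAm Set.inter_subset_left hv
    have hu' := localBasisOn_mono (hF k) hAm Set.inter_subset_right hu
    exact hnk (localBasisOn_rank_eq hAm hpos hv' hu')
  -- finite-dimensional pieces don't meet the infinite part of the other decomposition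
  have EFinf_null : ∀ n, μ (E n ∩ Finf) = 0 := by
    intro n
    by_contra hne
    have hpos : 0 < μ (E n ∩ Finf) := pos_iff_ne_zero.2 hne
    have hposE : 0 < μ (E n) := lt_of_lt_of_le hpos (measure_mono Set.inter_subset_left)
    obtain ⟨v, hv⟩ := hEbasis n hposE
    have hAm : MeasurableSet (E n ∩ Finf) := (hE n).inter hFinf
    exact hFnone _ hAm Set.inter_subset_right hpos
      ⟨n, v, localBasisOn_mono (hE n) hAm Set.inter_subset_left hv⟩
  have FEinf_null : ∀ n, μ (F n ∩ Einf) = 0 := by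
    intro n
    by_contra hne
    have hpos : 0 < μ (F n ∩ Einf) := pos_iff_ne_zero.2 hne
    have hposF : 0 < μ (F n) := lt_of_lt_of_le hpos (measure_mono Set.inter_subset_left)
    obtain ⟨v, hv⟩ := hFbasis n hposF
    have hAm : MeasurableSet (F n ∩ Einf) := (hF n).inter hEinf
    exact hEnone _ hAm Set.inter_subset_right hpos
      ⟨n, v, localBasisOn_mono (hF n) hAm Set.inter_subset_left hv⟩
  -- difference estimates
  have hEF : ∀ n, μ (E n \ F n) = 0 := by
    intro n
    have hsub : E n \ F n ⊆ ⋃ k, (if k = n then E n ∩ Finf else E n ∩ F k) := by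
      intro x hx
      have hx1 : x ∈ E n := hx.1
      have hx2 : x ∉ F n := hx.2
      have : x ∈ (⋃ k, F k) ∪ Finf := by rw [hFcover]; trivial
      rcases this with hxF | hxinf
      · obtain ⟨k, hk⟩ := Set.mem_iUnion.1 hxF
        have hkn : k ≠ n := fun h => hx2 (h ▸ hk)
        exact Set.mem_iUnion.2 ⟨k, by simp [hkn, hx1, hk]⟩
      · exact Set.mem_iUnion.2 ⟨n, by simp [hx1, hxinf]⟩
    refine measure_mono_null hsub (measure_iUnion_null fun k => ?_)
    by_cases hk : k = n
    · simpa [hk] using EFinf_null n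
    · simpa [hk] using inter_null n k (fun h => hk h.symm)
  have hFE : ∀ n, μ (F n \ E n) = 0 := by
    intro n
    have hsub : F n \ E n ⊆ ⋃ k, (if k = n then F n ∩ Einf else F n ∩ E k) := by
      intro x hx
      have hx1 : x ∈ F n := hx.1
      have hx2 : x ∉ E n := hx.2
      have : x ∈ (⋃ k, E k) ∪ Einf := by rw [hEcover]; trivial
      rcases this with hxE | hxinf
      · obtain ⟨k, hk⟩ := Set.mem_iUnion.1 hxE
        have hkn : k ≠ n := fun h => hx2 (h ▸ hk)
        exact Set.mem_iUnion.2 ⟨k, by simp [hkn, hx1, hk]⟩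
      · exact Set.mem_iUnion.2 ⟨n, by simp [hx1, hxinf]⟩
    refine measure_mono_null hsub (measure_iUnion_null fun k => ?_)
    by_cases hk : k = n
    · simpa [hk] using FEinf_null n
    · have := inter_null k n hk
      rw [Set.inter_comm] at this
      simpa [hk] using this
  have hEinfFinf : μ (Einf \ Finf) = 0 := by
    have hsub : Einf \ Finf ⊆ ⋃ k, (F k ∩ Einf) := by
      intro x hx
      have : x ∈ (⋃ k, F k) ∪ Finf := by rw [hFcover]; trivial
      rcases this with hxF | hxinf
      · obtain ⟨k, hk⟩ := Set.mem_iUnion.1 hxF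
        exact Set.mem_iUnion.2 ⟨k, hk, hx.1⟩
      · exact absurd hxinf hx.2
    exact measure_mono_null hsub (measure_iUnion_null fun k => FEinf_null k)
  have hFinfEinf : μ (Finf \ Einf) = 0 := by
    have hsub : Finf \ Einf ⊆ ⋃ k, (E k ∩ Finf) := by
      intro x hx
      have : x ∈ (⋃ k, E k) ∪ Einf := by rw [hEcover]; trivial
      rcases this with hxE | hxinf
      · obtain ⟨k, hk⟩ := Set.mem_iUnion.1 hxE
        exact Set.mem_iUnion.2 ⟨k, hk, hx.1⟩
      · exact absurd hxinf hx.2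
    exact measure_mono_null hsub (measure_iUnion_null fun k => EFinf_null k)
  constructor
  · intro n
    rw [Set.symmDiff_def]
    exact measure_union_null (hEF n) (hFE n)
  · rw [Set.symmDiff_def]
    exact measure_union_null hEinfFinf hFinfEinf

end L0SerreSwan
end

section
/- Let M be a proper L^0(m)-module and let N, P be L^0(m)-modules with the locality and glueing properties. Given a surjective module homomorphism f : N → P and a module homomorphism g : M → P, there exists a module homomorphism h : M → N with f ∘ h = g. -/
open MeasureTheory

namespace L0SerreSwan

variable {X : Type*} [MeasurableSpace X]

section Helpers

variable {μ : Measure X}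

lemma chi_eq_zero {A : Set X} (hA : MeasurableSet A) (h : μ A = 0) :
    chi μ A hA = 0 := by
  have h0 : (0 : X →ₘ[μ] ℝ) = AEEqFun.mk (fun _ => (0:ℝ)) aestronglyMeasurable_const := rfl
  rw [chi, h0]
  refine AEEqFun.mk_eq_mk.2 ?_
  filter_upwards [measure_eq_zero_iff_ae_notMem.mp h] with x hx
  simp [Set.indicator_of_notMem hx]

lemma chi_eq_one {A : Set X} (hA : MeasurableSet A) (h : μ Aᶜ = 0) :
    chi μ A hA = 1 := by
  have h1 : (1 : X →ₘ[μ] ℝ) = AEEqFun.mk (fun _ => (1:ℝ)) aestronglyMeasurable_const := rfl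
  rw [chi, h1]
  refine AEEqFun.mk_eq_mk.2 ?_
  filter_upwards [measure_eq_zero_iff_ae_notMem.mp h] with x hx
  have hxA : x ∈ A := by simpa using hx
  simp [Set.indicator_of_mem hxA]

lemma eq_zero_of_forall_chi {Q : Type*} [AddCommGroup Q] [Module (X →ₘ[μ] ℝ) Q]
    (hloc : Locality μ Q) {E : ℕ → Set X} (hE : ∀ n, MeasurableSet (E n))
    (hone : chi μ (⋃ n, E n) (MeasurableSet.iUnion hE) = 1)
    {x : Q} (hx : ∀ n, chi μ (E n) (hE n) • x = 0) : x = 0 := by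
  have h := hloc x E hE hx
  rwa [hone, one_smul] at h

end Helpers

/-- **Proper modules are projective within the category of local modules with glueing.**
Let `M` be a proper `L⁰(m)`-module (an `L⁰(m)`-module with locality and glueing whose
dimensional decomposition has `m(E_∞) = 0`), and let `N`, `P` be `L⁰(m)`-modules with the
locality and glueing properties. Given a surjective module homomorphism `f : N → P` and a
module homomorphism `g : M → P`, there exists a module homomorphism `h : M → N` with
`f ∘ h = g`. -/
theorem proper_module_lifting_property
    {X : Type*} [MetricSpace X] [CompleteSpace X] [SecondCountableTopology X]
    [MeasurableSpace X] [BorelSpace X]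
    (μ : Measure X) [IsLocallyFiniteMeasure μ] (hμ : μ ≠ 0)
    (M : Type*) [AddCommGroup M] [Module (X →ₘ[μ] ℝ) M]
    (hlocM : Locality μ M) (hglueM : Glueing μ M)
    (hproper : ∃ (E : ℕ → Set X) (hE : ∀ n, MeasurableSet (E n))
      (Einf : Set X) (hEinf : MeasurableSet Einf),
      DimDecomp μ M E hE Einf hEinf ∧ μ Einf = 0)
    (N : Type*) [AddCommGroup N] [Module (X →ₘ[μ] ℝ) N]
    (hlocN : Locality μ N) (hglueN : Glueing μ N)
    (P : Type*) [AddCommGroup P] [Module (X →ₘ[μ] ℝ) P]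
    (hlocP : Locality μ P) (hglueP : Glueing μ P)
    (f : N →ₗ[X →ₘ[μ] ℝ] P) (hf : Function.Surjective f)
    (g : M →ₗ[X →ₘ[μ] ℝ] P) :
    ∃ h : M →ₗ[X →ₘ[μ] ℝ] N, f ∘ₗ h = g := by
  classical
  obtain ⟨E, hE, Einf, hEinf, hdd, hnull⟩ := hproper
  obtain ⟨hdisj, hdisjInf, hcover, hbasis, -⟩ := hdd
  -- the union of the E n has full measure, so its characteristic function is 1
  have hchiU : chi μ (⋃ n, E n) (MeasurableSet.iUnion hE) = 1 := by
    apply chi_eq_one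
    refine measure_mono_null ?_ hnull
    intro x hx
    have hx2 : x ∈ (⋃ n, E n) ∪ Einf := by rw [hcover]; exact Set.mem_univ x
    rcases hx2 with h | h
    · exact absurd h hx
    · exact h
  -- uniqueness of elements determined on the pieces E n
  have huniqN : ∀ x y : N, (∀ n, chi μ (E n) (hE n) • x = chi μ (E n) (hE n) • y) → x = y := by
    intro x y hxy
    have : x - y = 0 := eq_zero_of_forall_chi hlocN hE hchiU
      (fun n => by rw [smul_sub, hxy n, sub_self])
    exact sub_eq_zero.mp this
  have huniqP : ∀ x y : P, (∀ n, chi μ (E n) (hE n) • x = chi μ (E n) (hE n) • y) → x = y := by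
    intro x y hxy
    have : x - y = 0 := eq_zero_of_forall_chi hlocP hE hchiU
      (fun n => by rw [smul_sub, hxy n, sub_self])
    exact sub_eq_zero.mp this
  -- local bases exist on every E n (trivially if E n is null)
  have hbasis' : ∀ n, ∃ v : Fin n → M, LocalBasisOn μ (E n) (hE n) v := by
    intro n
    rcases eq_zero_or_pos (μ (E n)) with h | h
    · have hz : chi μ (E n) (hE n) = 0 := chi_eq_zero (hE n) h
      refine ⟨fun _ => 0, fun w => ⟨fun _ => 0, by simp [hz]⟩, fun c hc i => by simp [hz]⟩
    · exact hbasis n h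
  choose v hv using hbasis'
  -- lift images of basis vectors through f
  choose w hw using fun n (i : Fin n) => hf (g (v n i))
  -- coefficients of elements of M
  choose c hc using fun (m : M) n => (hv n).1 m
  -- uniqueness of coefficients
  have cuniq : ∀ (n : ℕ) (a b : Fin n → (X →ₘ[μ] ℝ)),
      (∑ i, (chi μ (E n) (hE n) * a i) • v n i)
        = (∑ i, (chi μ (E n) (hE n) * b i) • v n i) →
      ∀ i, chi μ (E n) (hE n) * a i = chi μ (E n) (hE n) * b i := by
    intro n a b hab i
    have h0 : (∑ i, (chi μ (E n) (hE n) * (a i - b i)) • v n i) = 0 := by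
      simp only [mul_sub, sub_smul, Finset.sum_sub_distrib, hab, sub_self]
    have h1 := (hv n).2 _ h0 i
    rw [mul_sub, sub_eq_zero] at h1
    exact h1
  -- glue the candidate lifts
  have hglue : ∀ m : M, ∃ x : N, ∀ n, chi μ (E n) (hE n) • x
      = chi μ (E n) (hE n) • (∑ i, (chi μ (E n) (hE n) * c m n i) • w n i) :=
    fun m => hglueN (fun n => ∑ i, (chi μ (E n) (hE n) * c m n i) • w n i) E hE hdisj
  choose h0 hh0 using hglue
  have key : ∀ m n, chi μ (E n) (hE n) • h0 m
      = ∑ i, (chi μ (E n) (hE n) * c m n i) • w n i := by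
    intro m n
    rw [hh0 m n, Finset.smul_sum]
    refine Finset.sum_congr rfl fun i _ => ?_
    rw [smul_smul, ← mul_assoc, chi_mul_self]
  -- key: the formula holds for any representation of the coefficients
  have key' : ∀ m n (a : Fin n → (X →ₘ[μ] ℝ)),
      chi μ (E n) (hE n) • m = ∑ i, (chi μ (E n) (hE n) * a i) • v n i →
      chi μ (E n) (hE n) • h0 m = ∑ i, (chi μ (E n) (hE n) * a i) • w n i := by
    intro m n a ha
    have he := cuniq n (c m n) a ((hc m n).symm.trans ha)
    rw [key m n]
    exact Finset.sum_congr rfl fun i _ => by rw [he i]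
  -- additivity
  have hadd : ∀ m m' : M, h0 (m + m') = h0 m + h0 m' := by
    intro m m'
    apply huniqN
    intro n
    have hrep : chi μ (E n) (hE n) • (m + m')
        = ∑ i, (chi μ (E n) (hE n) * (c m n i + c m' n i)) • v n i := by
      rw [smul_add, hc m n, hc m' n, ← Finset.sum_add_distrib]
      exact Finset.sum_congr rfl fun i _ => by rw [mul_add, add_smul]
    rw [key' (m + m') n _ hrep, smul_add, key m n, key m' n, ← Finset.sum_add_distrib]
    exact Finset.sum_congr rfl fun i _ => by rw [mul_add, add_smul]
  -- homogeneity
  have hsmul : ∀ (a : X →ₘ[μ] ℝ) (m : M), h0 (a • m) = a • h0 m := by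
    intro a m
    apply huniqN
    intro n
    have hrep : chi μ (E n) (hE n) • (a • m)
        = ∑ i, (chi μ (E n) (hE n) * (a * c m n i)) • v n i := by
      rw [smul_smul, mul_comm, ← smul_smul, hc m n, Finset.smul_sum]
      exact Finset.sum_congr rfl fun i _ => by
        rw [smul_smul, mul_left_comm]
    rw [key' (a • m) n _ hrep, smul_comm, key m n, Finset.smul_sum]
    exact Finset.sum_congr rfl fun i _ => by rw [smul_smul, mul_left_comm]
  refine ⟨{ toFun := h0, map_add' := hadd, map_smul' := hsmul }, ?_⟩
  apply LinearMap.ext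
  intro m
  apply huniqP
  intro n
  show chi μ (E n) (hE n) • f (h0 m) = chi μ (E n) (hE n) • g m
  rw [← f.map_smul, key m n, map_sum, ← g.map_smul, hc m n, map_sum]
  exact Finset.sum_congr rfl fun i _ => by rw [f.map_smul, g.map_smul, hw n i]

end L0SerreSwan
end

section
/- The space of (m-a.e. equivalence classes of) measurable sections Γ(T) of a measurable Banach bundle T over X, equipped with pointwise operations, the pointwise norm |s|(x) = n(s(x)), and the distance d(s_1,s_2) = ∫ |s_1−s_2| ∧ 1 dm', is a proper L^0(m)-normed L^0(m)-module whose dimensional decomposition is given by the partition (E_n) of the bundle; in particular the constant sections e_1,…,e_n of the canonical basis of ℝ^n form a local basis of Γ(T) on E_n. -/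
open MeasureTheory Filter

namespace L0SerreSwan

/-- A measurable Banach bundle over `(X,d,m)`: a Borel partition `(E_n)_{n∈ℕ}` of `X`,
with total space `⊔ₙ Eₙ × ℝⁿ`, together with a measurable function `nrm` assigning to
`m`-a.e. point `x ∈ E_n` a norm `nrm n x ·` on the fiber `ℝⁿ`. -/
structure MBB (X : Type*) [MeasurableSpace X] (μ : MeasureTheory.Measure X) where
  E : ℕ → Set X
  measE : ∀ n, MeasurableSet (E n)
  disjE : ∀ n m, n ≠ m → Disjoint (E n) (E m)
  unionE : (⋃ n, E n) = Set.univ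
  nrm : (n : ℕ) → X → (Fin n → ℝ) → ℝ
  meas_nrm : ∀ n, Measurable (fun p : X × (Fin n → ℝ) => nrm n p.1 p.2)
  nrm_nonneg : ∀ n, ∀ᵐ x ∂μ, x ∈ E n → ∀ v, 0 ≤ nrm n x v
  nrm_definite : ∀ n, ∀ᵐ x ∂μ, x ∈ E n → ∀ v, nrm n x v = 0 → v = 0
  nrm_smul : ∀ n, ∀ᵐ x ∂μ, x ∈ E n → ∀ (c : ℝ) (v), nrm n x (c • v) = |c| * nrm n x v
  nrm_triangle : ∀ n, ∀ᵐ x ∂μ, x ∈ E n → ∀ v w, nrm n x (v + w) ≤ nrm n x v + nrm n x w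

variable {X : Type*} [MeasurableSpace X] {μ : MeasureTheory.Measure X}

/-- A measurable section of a measurable Banach bundle, recorded by its values
`val n x ∈ ℝⁿ` (only the values for `x ∈ E_n` are relevant). -/
structure Sec (B : MBB X μ) where
  val : (n : ℕ) → X → Fin n → ℝ
  meas : ∀ n, Measurable (val n)

/-- Two sections agree `m`-a.e. (fiberwise, on each piece of the partition). -/
def Sec.aeeq (B : MBB X μ) (s t : Sec B) : Prop :=
  ∀ n, ∀ᵐ x ∂μ, x ∈ B.E n → s.val n x = t.val n x

/-- Pointwise sum of sections. -/
def Sec.add {B : MBB X μ} (s t : Sec B) : Sec B :=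
  ⟨fun n x i => s.val n x i + t.val n x i, fun n =>
    measurable_pi_lambda _ fun i =>
      ((measurable_pi_apply i).comp (s.meas n)).add
        ((measurable_pi_apply i).comp (t.meas n))⟩

/-- Pointwise difference of sections. -/
def Sec.sub {B : MBB X μ} (s t : Sec B) : Sec B :=
  ⟨fun n x i => s.val n x i - t.val n x i, fun n =>
    measurable_pi_lambda _ fun i =>
      ((measurable_pi_apply i).comp (s.meas n)).sub
        ((measurable_pi_apply i).comp (t.meas n))⟩

/-- Multiplication of a section by a (Borel representative of an) `L⁰` function. -/
def Sec.smul {B : MBB X μ} (g : X → ℝ) (hg : Measurable g) (s : Sec B) : Sec B :=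
  ⟨fun n x i => g x * s.val n x i, fun n =>
    measurable_pi_lambda _ fun i =>
      hg.mul ((measurable_pi_apply i).comp (s.meas n))⟩

/-- The pointwise norm `|s|(x) = nrm(s(x))` of a section. -/
noncomputable def ptNorm (B : MBB X μ) (s : Sec B) : X → ℝ :=
  fun x => ∑' n, (B.E n).indicator (fun y => B.nrm n y (s.val n y)) x

/-- The distance `d(s,t) = ∫ |s-t| ∧ 1 dm'` on sections. -/
noncomputable def secDist (B : MBB X μ) (m' : MeasureTheory.Measure X) (s t : Sec B) : ℝ :=
  ∫ x, min (ptNorm B (s.sub t) x) 1 ∂m'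

/-- The constant section associated to a vector `q ∈ ℝⁿ`: it equals `q` on `E_n` and
vanishes on the other pieces of the partition. -/
def constSec (B : MBB X μ) (n : ℕ) (q : Fin n → ℝ) : Sec B :=
  ⟨fun k _x i => if h : k = n then q (Fin.cast h i) else 0,
   fun _k => measurable_const⟩

/-- A finite `L⁰`-linear combination `∑ᵢ gᵢ • uᵢ` of sections. -/
def lincomb {B : MBB X μ} {k : ℕ} (g : Fin k → X → ℝ) (hg : ∀ i, Measurable (g i))
    (u : Fin k → Sec B) : Sec B :=
  ⟨fun n x j => ∑ i, g i x * (u i).val n x j, fun n =>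
    measurable_pi_lambda _ fun j =>
      Finset.measurable_sum _ fun i _ =>
        (hg i).mul ((measurable_pi_apply j).comp ((u i).meas n))⟩


/-!
Over each point `x ∈ E_n` a section takes values in the finite-dimensional space
`(ℝⁿ, n(x, ·))`, so `Γ(T)` behaves like `L⁰` and the proof is the classical one. The
truncated distance `∫ |s - t| ∧ 1 dm'` is a pseudometric whose null pairs are the a.e. equal
ones. For completeness it suffices to treat sequences with `d(u_j, u_{j+1}) < 2⁻ʲ`: then
`∑ⱼ (|u_j - u_{j+1}| ∧ 1)(x) < ∞` a.e., so `∑ⱼ |u_j - u_{j+1}|(x) < ∞` a.e. Since every norm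
on `ℝⁿ` dominates a multiple of the sup norm (compactness of the unit sphere), `u_j(x)`
converges a.e., and dominated convergence turns this a.e. limit into a limit for `d`.
The local basis on `E_n` is the standard basis of `ℝⁿ`.
-/

open Topology

structure IsNorm {E : Type*} [AddCommGroup E] [Module ℝ E] (N : E → ℝ) : Prop where
  nonneg : ∀ v, 0 ≤ N v
  eq_zero : ∀ v, N v = 0 → v = 0
  smul : ∀ (c : ℝ) v, N (c • v) = |c| * N v
  add_le : ∀ v w, N (v + w) ≤ N v + N w

namespace IsNorm

section Module

variable {E : Type*} [AddCommGroup E] [Module ℝ E] {N : E → ℝ}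

def toSeminorm (h : IsNorm N) : Seminorm ℝ E :=
  Seminorm.of N h.add_le fun c v => by rw [h.smul, Real.norm_eq_abs]

lemma map_zero (h : IsNorm N) : N 0 = 0 :=
  _root_.map_zero h.toSeminorm

lemma map_sub_rev (h : IsNorm N) (v w : E) : N (v - w) = N (w - v) :=
  _root_.map_sub_rev h.toSeminorm v w

end Module

variable {E : Type*} [NormedAddCommGroup E] [NormedSpace ℝ E] [FiniteDimensional ℝ E]
  {N : E → ℝ}

lemma continuous (h : IsNorm N) : Continuous N :=
  h.toSeminorm.convexOn.locallyLipschitz.continuous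

lemma exists_pos_mul_norm_le (h : IsNorm N) : ∃ c > 0, ∀ v, c * ‖v‖ ≤ N v := by
  obtain ⟨c, hc, hcN⟩ :=
    (isCompact_sphere (0 : E) 1).exists_forall_le' h.continuous.continuousOn
    fun v hv => (h.nonneg v).lt_of_ne' fun hv0 => by simp [h.eq_zero v hv0] at hv
  refine ⟨c, hc, fun v => ?_⟩
  rcases eq_or_ne v 0 with rfl | hv
  · simp [h.map_zero]
  have hv' : 0 < ‖v‖ := norm_pos_iff.2 hv
  have := hcN (‖v‖⁻¹ • v) (by simp [norm_smul, hv'.ne'])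
  rwa [h.smul, abs_of_pos (inv_pos.2 hv'), le_inv_mul_iff₀ hv', mul_comm] at this

lemma exists_tendsto_of_summable (h : IsNorm N) {v : ℕ → E}
    (hv : Summable fun j => N (v j - v (j + 1))) : ∃ l, Tendsto v atTop (𝓝 l) := by
  obtain ⟨c, hc, hcN⟩ := h.exists_pos_mul_norm_le
  refine cauchySeq_tendsto_of_complete (cauchySeq_of_summable_dist <|
    (hv.mul_left c⁻¹).of_nonneg_of_le (fun _ => dist_nonneg) fun j => ?_)
  rw [dist_eq_norm, le_inv_mul_iff₀ hc]
  exact hcN _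

lemma tendsto_sub {ι : Type*} {l : Filter ι} (h : IsNorm N) {v : ι → E} {a : E}
    (hv : Tendsto v l (𝓝 a)) : Tendsto (fun j => N (v j - a)) l (𝓝 0) := by
  have := (h.continuous.tendsto 0).comp (tendsto_sub_nhds_zero_iff.2 hv)
  rwa [h.map_zero] at this

end IsNorm

section TruncatedIntegral

variable {α : Type*} [MeasurableSpace α] {ν : Measure α}

lemma min_one_le_add_min_one {a b c : ℝ} (ha : 0 ≤ a) (hb : 0 ≤ b) (hc : c ≤ a + b) :
    min c 1 ≤ min a 1 + min b 1 := by
  rcases le_total a 1 with ha1 | ha1 <;> rcases le_total b 1 with hb1 | hb1 <;>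
    simp only [min_eq_left, min_eq_right, ha1, hb1] <;>
    linarith [min_le_left c 1, min_le_right c 1]

variable [IsFiniteMeasure ν] {f : α → ℝ}

lemma integrable_min_one (hf : AEMeasurable f ν) (hf0 : 0 ≤ᵐ[ν] f) :
    Integrable (fun x => min (f x) 1) ν := by
  refine (integrable_const 1).mono' (hf.min aemeasurable_const).aestronglyMeasurable ?_
  filter_upwards [hf0] with x hx
  rw [Real.norm_of_nonneg (le_min hx zero_le_one)]
  exact min_le_right _ _

lemma integral_min_one_eq_zero_iff (hf : AEMeasurable f ν) (hf0 : 0 ≤ᵐ[ν] f) :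
    ∫ x, min (f x) 1 ∂ν = 0 ↔ f =ᵐ[ν] 0 := by
  rw [integral_eq_zero_iff_of_nonneg_ae (hf0.mono fun x hx => le_min hx zero_le_one)
    (integrable_min_one hf hf0)]
  refine eventually_congr (hf0.mono fun x hx => ?_)
  rcases le_total (f x) 1 with h | h
  · simp [h]
  · simp [h]; linarith

lemma ae_summable_of_summable_integral_min_one {F : ℕ → α → ℝ}
    (hF : ∀ j, AEMeasurable (F j) ν) (hF0 : ∀ j, 0 ≤ᵐ[ν] F j)
    (hsum : Summable fun j => ∫ x, min (F j x) 1 ∂ν) :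
    ∀ᵐ x ∂ν, Summable fun j => F j x := by
  have hG : ∀ j, AEMeasurable (fun x => min (F j x) 1) ν := fun j =>
    (hF j).min aemeasurable_const
  have hG0 : ∀ j, ∀ᵐ x ∂ν, 0 ≤ min (F j x) 1 := fun j =>
    (hF0 j).mono fun x hx => le_min hx zero_le_one
  have hlint : ∫⁻ x, ∑' j, ENNReal.ofReal (min (F j x) 1) ∂ν ≠ ⊤ := by
    rw [lintegral_tsum fun j => (hG j).ennreal_ofReal]
    simp_rw [← ofReal_integral_eq_lintegral_ofReal (integrable_min_one (hF _) (hF0 _)) (hG0 _)]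
    rw [← ENNReal.ofReal_tsum_of_nonneg (fun j => integral_nonneg_of_ae (hG0 j)) hsum]
    exact ENNReal.ofReal_ne_top
  filter_upwards [ae_lt_top' (AEMeasurable.tsum fun j => (hG j).ennreal_ofReal) hlint,
    ae_all_iff.2 hF0, ae_all_iff.2 hG0] with x hx hx0 hxG0
  have hGx : Summable fun j => min (F j x) 1 :=
    (ENNReal.summable_toReal hx.ne).congr fun j => ENNReal.toReal_ofReal (hxG0 j)
  -- once the truncation `min (F j x) 1` is below `1`, it is `F j x` itself
  refine hGx.of_norm_bounded_eventually ?_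
  filter_upwards [hGx.tendsto_cofinite_zero.eventually (gt_mem_nhds one_pos)] with j hj
  rw [Real.norm_of_nonneg (hx0 j)]
  rcases le_total (F j x) 1 with h | h
  · rw [min_eq_left h]
  · rw [min_eq_right h] at hj
    exact absurd hj (lt_irrefl 1)

lemma tendsto_integral_min_one_of_ae_tendsto {ι : Type*} {l : Filter ι}
    [l.IsCountablyGenerated] {F : ι → α → ℝ} (hF : ∀ j, AEMeasurable (F j) ν)
    (hF0 : ∀ j, 0 ≤ᵐ[ν] F j)
    (hlim : ∀ᵐ x ∂ν, Tendsto (fun j => F j x) l (𝓝 0)) :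
    Tendsto (fun j => ∫ x, min (F j x) 1 ∂ν) l (𝓝 0) := by
  have := tendsto_integral_filter_of_dominated_convergence (fun _ => (1 : ℝ))
    (Eventually.of_forall fun j => ((hF j).min aemeasurable_const).aestronglyMeasurable)
    (Eventually.of_forall fun j => (hF0 j).mono fun x hx => by
      rw [Real.norm_of_nonneg (le_min hx zero_le_one)]
      exact min_le_right _ _)
    (integrable_const 1) (hlim.mono fun x hx => hx.min tendsto_const_nhds)
  simpa using this

end TruncatedIntegral

namespace MBB

variable (B : MBB X μ)

lemma exists_mem (x : X) : ∃ n, x ∈ B.E n :=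
  Set.mem_iUnion.1 (B.unionE ▸ Set.mem_univ x)

lemma eq_of_mem {n k : ℕ} {x : X} (hn : x ∈ B.E n) (hk : x ∈ B.E k) : n = k :=
  by_contra fun h => Set.disjoint_left.1 (B.disjE n k h) hn hk

lemma ae_isNorm : ∀ᵐ x ∂μ, ∀ n, x ∈ B.E n → IsNorm (B.nrm n x) := by
  refine ae_all_iff.2 fun n => ?_
  filter_upwards [B.nrm_nonneg n, B.nrm_definite n, B.nrm_smul n, B.nrm_triangle n]
    with x h₁ h₂ h₃ h₄ hx using ⟨h₁ hx, h₂ hx, h₃ hx, h₄ hx⟩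

end MBB

namespace Sec

variable {B : MBB X μ}

@[simp] lemma val_sub (s t : Sec B) (n : ℕ) (x : X) :
    (s.sub t).val n x = s.val n x - t.val n x := rfl

@[simp] lemma val_smul (g : X → ℝ) (hg : Measurable g) (s : Sec B) (n : ℕ) (x : X) :
    (Sec.smul g hg s).val n x = g x • s.val n x := rfl

end Sec

variable (B : MBB X μ)

@[simp] lemma constSec_val_self {n : ℕ} (q : Fin n → ℝ) (x : X) :
    (constSec B n q).val n x = q := by
  simp [constSec]

lemma ptNorm_eq_of_mem (s : Sec B) {n : ℕ} {x : X} (hx : x ∈ B.E n) :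
    ptNorm B s x = B.nrm n x (s.val n x) := by
  rw [ptNorm, tsum_eq_single n fun k hk =>
    Set.indicator_of_notMem (fun hk' => hk (B.eq_of_mem hk' hx)) _, Set.indicator_of_mem hx]

lemma measurable_ptNorm (s : Sec B) : Measurable (ptNorm B s) :=
  Measurable.tsum fun n =>
    ((B.meas_nrm n).comp (measurable_id.prodMk (s.meas n))).indicator (B.measE n)

lemma ae_exists_isNorm_ptNorm_eq : ∀ᵐ x ∂μ, ∃ n, x ∈ B.E n ∧ IsNorm (B.nrm n x) ∧
    ∀ s : Sec B, ptNorm B s x = B.nrm n x (s.val n x) := by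
  filter_upwards [B.ae_isNorm] with x hx
  obtain ⟨n, hn⟩ := B.exists_mem x
  exact ⟨n, hn, hx n hn, fun s => ptNorm_eq_of_mem B s hn⟩

lemma ae_ptNorm_nonneg (s : Sec B) : ∀ᵐ x ∂μ, 0 ≤ ptNorm B s x := by
  filter_upwards [ae_exists_isNorm_ptNorm_eq B] with x ⟨n, _, hN, hpt⟩
  exact hpt s ▸ hN.nonneg _

lemma ae_ptNorm_smul (g : X → ℝ) (hg : Measurable g) (s : Sec B) :
    (fun x => ptNorm B (Sec.smul g hg s) x) =ᵐ[μ] fun x => |g x| * ptNorm B s x := by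
  filter_upwards [ae_exists_isNorm_ptNorm_eq B] with x ⟨n, _, hN, hpt⟩
  rw [hpt, hpt, Sec.val_smul, hN.smul]

lemma ae_ptNorm_sub_comm (s t : Sec B) : ptNorm B (s.sub t) =ᵐ[μ] ptNorm B (t.sub s) := by
  filter_upwards [ae_exists_isNorm_ptNorm_eq B] with x ⟨n, _, hN, hpt⟩
  rw [hpt, hpt, Sec.val_sub, Sec.val_sub, hN.map_sub_rev]

lemma ae_ptNorm_sub_le (s t u : Sec B) :
    ∀ᵐ x ∂μ, ptNorm B (s.sub u) x ≤ ptNorm B (s.sub t) x + ptNorm B (t.sub u) x := by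
  filter_upwards [ae_exists_isNorm_ptNorm_eq B] with x ⟨n, _, hN, hpt⟩
  simpa only [hpt, Sec.val_sub, sub_add_sub_cancel] using
    hN.add_le (s.val n x - t.val n x) (t.val n x - u.val n x)

lemma ptNorm_sub_ae_eq_zero_iff (s t : Sec B) :
    ptNorm B (s.sub t) =ᵐ[μ] 0 ↔ Sec.aeeq B s t := by
  constructor
  · intro h n
    filter_upwards [h, ae_exists_isNorm_ptNorm_eq B] with x hx ⟨k, hk, hN, hpt⟩ hxn
    obtain rfl := B.eq_of_mem hxn hk
    exact sub_eq_zero.1 (hN.eq_zero _ ((hpt _).symm.trans hx))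
  · intro h
    filter_upwards [ae_all_iff.2 h, ae_exists_isNorm_ptNorm_eq B] with x hx ⟨n, hn, hN, hpt⟩
    rw [hpt, Sec.val_sub, hx n hn, sub_self, hN.map_zero, Pi.zero_apply]

section SecDist

variable {m' : Measure X}

lemma integrable_min_ptNorm [IsFiniteMeasure m'] (hm' : m' ≪ μ) (s : Sec B) :
    Integrable (fun x => min (ptNorm B s x) 1) m' :=
  integrable_min_one (measurable_ptNorm B s).aemeasurable (hm'.ae_le (ae_ptNorm_nonneg B s))

lemma secDist_nonneg (hm' : m' ≪ μ) (s t : Sec B) : 0 ≤ secDist B m' s t :=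
  integral_nonneg_of_ae <| by
    filter_upwards [hm'.ae_le (ae_ptNorm_nonneg B (s.sub t))] with x hx
    exact le_min hx zero_le_one

lemma secDist_eq_zero_iff [IsFiniteMeasure m'] (hμ : μ ≪ m') (hm' : m' ≪ μ) (s t : Sec B) :
    secDist B m' s t = 0 ↔ Sec.aeeq B s t := by
  rw [secDist, integral_min_one_eq_zero_iff (measurable_ptNorm B _).aemeasurable
    (hm'.ae_le (ae_ptNorm_nonneg B _)), ← ptNorm_sub_ae_eq_zero_iff]
  exact ⟨fun h => hμ.ae_le h, fun h => hm'.ae_le h⟩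

lemma secDist_self [IsFiniteMeasure m'] (hm' : m' ≪ μ) (s : Sec B) : secDist B m' s s = 0 :=
  (integral_min_one_eq_zero_iff (measurable_ptNorm B _).aemeasurable
    (hm'.ae_le (ae_ptNorm_nonneg B _))).2 <|
    hm'.ae_le ((ptNorm_sub_ae_eq_zero_iff B s s).2 fun _ => ae_of_all _ fun _ _ => rfl)

lemma secDist_comm (hm' : m' ≪ μ) (s t : Sec B) : secDist B m' s t = secDist B m' t s :=
  integral_congr_ae <| by
    filter_upwards [hm'.ae_le (ae_ptNorm_sub_comm B s t)] with x hx
    rw [hx]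

lemma secDist_triangle [IsFiniteMeasure m'] (hm' : m' ≪ μ) (s t u : Sec B) :
    secDist B m' s u ≤ secDist B m' s t + secDist B m' t u := by
  have hle : ∀ᵐ x ∂m', min (ptNorm B (s.sub u) x) 1
      ≤ min (ptNorm B (s.sub t) x) 1 + min (ptNorm B (t.sub u) x) 1 := by
    filter_upwards [hm'.ae_le (ae_ptNorm_sub_le B s t u),
      hm'.ae_le (ae_ptNorm_nonneg B (s.sub t)), hm'.ae_le (ae_ptNorm_nonneg B (t.sub u))]
      with x h h₁ h₂ using min_one_le_add_min_one h₁ h₂ h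
  calc secDist B m' s u
      ≤ ∫ x, (min (ptNorm B (s.sub t) x) 1 + min (ptNorm B (t.sub u) x) 1) ∂m' :=
        integral_mono_ae (integrable_min_ptNorm B hm' _)
          ((integrable_min_ptNorm B hm' _).add (integrable_min_ptNorm B hm' _)) hle
    _ = secDist B m' s t + secDist B m' t u :=
        integral_add (integrable_min_ptNorm B hm' _) (integrable_min_ptNorm B hm' _)

noncomputable abbrev secPseudoMetricSpace [IsFiniteMeasure m'] (hm' : m' ≪ μ) :
    PseudoMetricSpace (Sec B) where
  dist := secDist B m'
  dist_self := secDist_self B hm'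
  dist_comm := secDist_comm B hm'
  dist_triangle := secDist_triangle B hm'

lemma exists_tendsto_secDist_of_lt_geometric [IsFiniteMeasure m'] (hμ : μ ≪ m')
    (hm' : m' ≪ μ) {u : ℕ → Sec B} (hu : ∀ j, secDist B m' (u j) (u (j + 1)) < (1 / 2) ^ j) :
    ∃ s : Sec B, Tendsto (fun j => secDist B m' (u j) s) atTop (𝓝 0) := by
  have hsum : ∀ᵐ x ∂μ, Summable fun j => ptNorm B ((u j).sub (u (j + 1))) x :=
    hμ.ae_le <| ae_summable_of_summable_integral_min_one
      (fun _ => (measurable_ptNorm B _).aemeasurable) (fun _ => hm'.ae_le (ae_ptNorm_nonneg B _))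
      (summable_geometric_two.of_nonneg_of_le (fun j => secDist_nonneg B hm' _ _)
        fun j => (hu j).le)
  -- off `E n` the values `(u j).val n x` are irrelevant; the indicator makes them converge
  have hconv : ∀ n, ∀ᵐ x ∂μ, ∃ l,
      Tendsto (fun j => (B.E n).indicator ((u j).val n) x) atTop (𝓝 l) := by
    intro n
    filter_upwards [hsum, ae_exists_isNorm_ptNorm_eq B] with x hx ⟨k, hk, hN, hpt⟩
    by_cases hxn : x ∈ B.E n
    · obtain rfl := B.eq_of_mem hxn hk
      simp only [Set.indicator_of_mem hxn]
      exact hN.exists_tendsto_of_summable (by simpa only [hpt, Sec.val_sub] using hx)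
    · simp only [Set.indicator_of_notMem hxn]
      exact ⟨0, tendsto_const_nhds⟩
  choose v hv_meas hv_lim using fun n => measurable_limit_of_tendsto_metrizable_ae
    (fun j => (((u j).meas n).indicator (B.measE n)).aemeasurable) (hconv n)
  refine ⟨⟨v, hv_meas⟩, tendsto_integral_min_one_of_ae_tendsto
    (fun _ => (measurable_ptNorm B _).aemeasurable) (fun _ => hm'.ae_le (ae_ptNorm_nonneg B _))
    (hm'.ae_le ?_)⟩
  filter_upwards [ae_all_iff.2 hv_lim, ae_exists_isNorm_ptNorm_eq B] with x hx ⟨n, hn, hN, hpt⟩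
  simp only [hpt, Sec.val_sub]
  exact hN.tendsto_sub (by simpa only [Set.indicator_of_mem hn] using hx n)

lemma exists_tendsto_secDist_of_cauchy [IsFiniteMeasure m'] (hμ : μ ≪ m') (hm' : m' ≪ μ)
    (u : ℕ → Sec B)
    (hu : ∀ ε > (0:ℝ), ∃ N, ∀ p ≥ N, ∀ q ≥ N, secDist B m' (u p) (u q) < ε) :
    ∃ s : Sec B, Tendsto (fun k => secDist B m' (u k) s) atTop (𝓝 0) := by
  let := secPseudoMetricSpace B hm'
  have : CompleteSpace (Sec B) :=
    Metric.complete_of_convergent_controlled_sequences (fun j => (1 / 2) ^ j) (by simp)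
      fun w hw => by
        obtain ⟨s, hs⟩ := exists_tendsto_secDist_of_lt_geometric B hμ hm'
          fun j => hw j j (j + 1) le_rfl j.le_succ
        exact ⟨s, tendsto_iff_dist_tendsto_zero.2 hs⟩
  obtain ⟨s, hs⟩ := cauchySeq_tendsto_of_complete ((Metric.cauchySeq_iff (u := u)).2 hu)
  exact ⟨s, tendsto_iff_dist_tendsto_zero.1 hs⟩

end SecDist

theorem sections_form_proper_normed_module_general
    {X : Type*} [MeasurableSpace X] (μ : Measure X)
    (m' : Measure X) [IsProbabilityMeasure m'] (h₁ : μ ≪ m') (h₂ : m' ≪ μ)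
    (B : MBB X μ) :
    -- `secDist` is a distance on a.e.-equivalence classes of sections
    (∀ s t : Sec B, secDist B m' s t = secDist B m' t s) ∧
    (∀ s t u : Sec B, secDist B m' s u ≤ secDist B m' s t + secDist B m' t u) ∧
    (∀ s t : Sec B, secDist B m' s t = 0 ↔ Sec.aeeq B s t) ∧
    -- completeness
    (∀ u : ℕ → Sec B,
      (∀ ε > (0:ℝ), ∃ N, ∀ p ≥ N, ∀ q ≥ N, secDist B m' (u p) (u q) < ε) →
      ∃ s : Sec B, Tendsto (fun k => secDist B m' (u k) s) atTop (nhds 0)) ∧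
    -- pointwise-norm axioms of a normed module
    (∀ s : Sec B, ∀ᵐ x ∂μ, 0 ≤ ptNorm B s x) ∧
    (∀ (g : X → ℝ) (hg : Measurable g) (s : Sec B),
      (fun x => ptNorm B (Sec.smul g hg s) x) =ᵐ[μ] fun x => |g x| * ptNorm B s x) ∧
    -- the partition `(E_n)` is a dimensional decomposition: the constant sections of the
    -- canonical basis vectors generate on `E_n` and are independent on `E_n`
    (∀ n : ℕ,
      (∀ s : Sec B, ∀ᵐ x ∂μ, x ∈ B.E n →
        s.val n x =
          ∑ i : Fin n, s.val n x i • (constSec B n (Pi.single i (1:ℝ))).val n x) ∧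
      (∀ g : Fin n → X → ℝ, (∀ i, Measurable (g i)) →
        (∀ᵐ x ∂μ, x ∈ B.E n →
          (∑ i : Fin n, g i x • (constSec B n (Pi.single i (1:ℝ))).val n x) = 0) →
        ∀ᵐ x ∂μ, x ∈ B.E n → ∀ i, g i x = 0)) := by
  refine ⟨secDist_comm B h₂, secDist_triangle B h₂, secDist_eq_zero_iff B h₁ h₂,
    exists_tendsto_secDist_of_cauchy B h₁ h₂, ae_ptNorm_nonneg B, ae_ptNorm_smul B,
    fun n => ⟨fun s => ae_of_all _ fun x _ => ?_, fun g _ hg => ?_⟩⟩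
  · simpa using ((Pi.basisFun ℝ (Fin n)).sum_repr (s.val n x)).symm
  · filter_upwards [hg] with x hx hxn
    exact Fintype.linearIndependent_iff.1 (Pi.basisFun ℝ (Fin n)).linearIndependent
      (fun i => g i x) (by simpa using hx hxn)

/-- **The section space is a proper normed module.** For a measurable Banach bundle `T`
over a metric measure space `(X,d,m)` and a probability measure `m'` with `m ≪ m' ≪ m`,
the space of `m`-a.e. equivalence classes of measurable sections, with pointwise
operations, pointwise norm `|s|(x) = n(s(x))` and distance `d(s,t) = ∫ |s-t| ∧ 1 dm'`,
is a proper `L⁰(m)`-normed `L⁰(m)`-module: `d` is a complete distance on a.e.-classes,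
the pointwise norm is nonnegative and `L⁰`-homogeneous, and its dimensional decomposition
is the partition `(E_n)` of the bundle — the constant sections of the canonical basis
vectors of `ℝⁿ` form a local basis on `E_n`. -/
theorem sections_form_proper_normed_module
    {X : Type*} [MetricSpace X] [CompleteSpace X] [SecondCountableTopology X]
    [MeasurableSpace X] [BorelSpace X]
    (μ : Measure X) [IsLocallyFiniteMeasure μ] (hμ : μ ≠ 0)
    (m' : Measure X) [IsProbabilityMeasure m'] (h₁ : μ ≪ m') (h₂ : m' ≪ μ)
    (B : MBB X μ) :
    -- `secDist` is a distance on a.e.-equivalence classes of sections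
    (∀ s t : Sec B, secDist B m' s t = secDist B m' t s) ∧
    (∀ s t u : Sec B, secDist B m' s u ≤ secDist B m' s t + secDist B m' t u) ∧
    (∀ s t : Sec B, secDist B m' s t = 0 ↔ Sec.aeeq B s t) ∧
    -- completeness
    (∀ u : ℕ → Sec B,
      (∀ ε > (0:ℝ), ∃ N, ∀ p ≥ N, ∀ q ≥ N, secDist B m' (u p) (u q) < ε) →
      ∃ s : Sec B, Tendsto (fun k => secDist B m' (u k) s) atTop (nhds 0)) ∧
    -- pointwise-norm axioms of a normed module
    (∀ s : Sec B, ∀ᵐ x ∂μ, 0 ≤ ptNorm B s x) ∧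
    (∀ (g : X → ℝ) (hg : Measurable g) (s : Sec B),
      (fun x => ptNorm B (Sec.smul g hg s) x) =ᵐ[μ] fun x => |g x| * ptNorm B s x) ∧
    -- the partition `(E_n)` is a dimensional decomposition: the constant sections of the
    -- canonical basis vectors generate on `E_n` and are independent on `E_n`
    (∀ n : ℕ,
      (∀ s : Sec B, ∀ᵐ x ∂μ, x ∈ B.E n →
        s.val n x =
          ∑ i : Fin n, s.val n x i • (constSec B n (Pi.single i (1:ℝ))).val n x) ∧
      (∀ g : Fin n → X → ℝ, (∀ i, Measurable (g i)) →
        (∀ᵐ x ∂μ, x ∈ B.E n →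
          (∑ i : Fin n, g i x • (constSec B n (Pi.single i (1:ℝ))).val n x) = 0) →
        ∀ᵐ x ∂μ, x ∈ B.E n → ∀ i, g i x = 0)) :=
  sections_form_proper_normed_module_general μ m' h₁ h₂ B

end L0SerreSwan
end

section
/- The section functor Γ : MBB(X) → NMod_pr(X) is full: every module morphism Φ : Γ(T_1) → Γ(T_2) (L^0(m)-linear with |Φ(s)| ≤ |s| m-a.e.) is of the form Γ(φ) for some MBB morphism φ : T_1 → T_2. -/
/-!
The morphism is forced: over `E¹ₙ ∩ E²ₘ` it must send `v ∈ ℝⁿ` to `∑ᵢ vᵢ Φ(eᵢ)(x)`, where `eᵢ`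
are the constant unit sections over `E¹ₙ`. Since `s = ∑ᵢ sᵢ eᵢ` on `E¹ₙ`, `L⁰`-linearity together
with locality (multiply by the indicator of `E¹ₙ`) gives `Φ(s) = φ ∘ s` a.e. Applying
`|Φ(s)| ≤ |s|` to the countably many constant sections with values in `ℚⁿ` yields, off one null
set, `|φₓ q| ≤ |q|` for all `q ∈ ℚⁿ`; both sides are seminorms on `ℝⁿ`, hence continuous, and the
inequality extends to all of `ℝⁿ` by density.
-/

open MeasureTheory Filter

namespace L0SerreSwan

variable {X : Type*} [MeasurableSpace X] {μ : MeasureTheory.Measure X}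

/-- A (pre-)morphism of measurable Banach bundles: a measurable map over `X` which, for
`m`-a.e. `x ∈ E¹_n ∩ E²_m`, is linear and 1-Lipschitz from the fiber of `T₁` to the
fiber of `T₂` at `x`. -/
structure MBBHom (B₁ B₂ : MBB X μ) where
  toFun : (n m : ℕ) → X → (Fin n → ℝ) → (Fin m → ℝ)
  meas : ∀ n m, Measurable (fun p : X × (Fin n → ℝ) => toFun n m p.1 p.2)
  ae_add : ∀ n m, ∀ᵐ x ∂μ, x ∈ B₁.E n ∩ B₂.E m →
    ∀ v w, toFun n m x (v + w) = toFun n m x v + toFun n m x w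
  ae_smul : ∀ n m, ∀ᵐ x ∂μ, x ∈ B₁.E n ∩ B₂.E m →
    ∀ (c : ℝ) (v), toFun n m x (c • v) = c • toFun n m x v
  ae_lipschitz : ∀ n m, ∀ᵐ x ∂μ, x ∈ B₁.E n ∩ B₂.E m →
    ∀ v, B₂.nrm m x (toFun n m x v) ≤ B₁.nrm n x v

/-- `t` represents the composition `φ ∘ s` (that is, `t` is a measurable section of `T₂`
which `m`-a.e. equals `φ` applied fiberwise to the section `s` of `T₁`). -/
def Represents {B₁ B₂ : MBB X μ} (φ : MBBHom B₁ B₂) (s : Sec B₁) (t : Sec B₂) : Prop :=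
  ∀ n m, ∀ᵐ x ∂μ, x ∈ B₁.E n ∩ B₂.E m → t.val m x = φ.toFun n m x (s.val n x)


theorem _root_.Seminorm.le_of_forall_rat_le {ι : Type*} [Fintype ι] (p q : Seminorm ℝ (ι → ℝ))
    (h : ∀ r : ι → ℚ, p (fun i => r i) ≤ q (fun i => r i)) (v : ι → ℝ) : p v ≤ q v := by
  have hcont (r : Seminorm ℝ (ι → ℝ)) : Continuous r :=
    continuousOn_univ.mp (r.convexOn.continuousOn isOpen_univ)
  exact (DenseRange.piMap fun _ => Rat.denseRange_cast).induction_on v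
    (isClosed_le (hcont p) (hcont q)) h

theorem MBB.ae_exists_seminorm (B : MBB X μ) (n : ℕ) :
    ∀ᵐ x ∂μ, x ∈ B.E n → ∃ p : Seminorm ℝ (Fin n → ℝ), ∀ v, p v = B.nrm n x v := by
  filter_upwards [B.nrm_triangle n, B.nrm_smul n] with x htri hsmul hx
  exact ⟨Seminorm.of (B.nrm n x) (htri hx) (hsmul hx), fun _ => rfl⟩

theorem MBB.ae_nrm_le_of_forall_rat (B₁ B₂ : MBB X μ) {n m : ℕ}
    (L : X → (Fin n → ℝ) →ₗ[ℝ] (Fin m → ℝ))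
    (h : ∀ r : Fin n → ℚ, ∀ᵐ x ∂μ, x ∈ B₁.E n ∩ B₂.E m →
      B₂.nrm m x (L x fun i => r i) ≤ B₁.nrm n x fun i => r i) :
    ∀ᵐ x ∂μ, x ∈ B₁.E n ∩ B₂.E m → ∀ v, B₂.nrm m x (L x v) ≤ B₁.nrm n x v := by
  filter_upwards [ae_all_iff.2 h, B₁.ae_exists_seminorm n, B₂.ae_exists_seminorm m]
    with x hrat hp₁ hp₂ hx v
  obtain ⟨p₁, hp₁⟩ := hp₁ hx.1
  obtain ⟨p₂, hp₂⟩ := hp₂ hx.2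
  have hle := (p₂.comp (L x)).le_of_forall_rat_le p₁ (by simpa [hp₁, hp₂] using (hrat · hx)) v
  simpa [hp₁, hp₂] using hle

theorem Sec.aeeq_of_forall {B : MBB X μ} {s t : Sec B} (h : ∀ n x, s.val n x = t.val n x) :
    Sec.aeeq B s t :=
  fun n => ae_of_all _ fun x _ => h n x

theorem Sec.aeeq.symm {B : MBB X μ} {s t : Sec B} (h : Sec.aeeq B s t) : Sec.aeeq B t s :=
  fun n => by filter_upwards [h n] with x hx hn using (hx hn).symm

theorem Sec.aeeq.trans {B : MBB X μ} {s t u : Sec B} (hst : Sec.aeeq B s t)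
    (htu : Sec.aeeq B t u) : Sec.aeeq B s u :=
  fun n => by filter_upwards [hst n, htu n] with x h₁ h₂ hn using (h₁ hn).trans (h₂ hn)

theorem Sec.aeeq.add {B : MBB X μ} {s s' t t' : Sec B} (hs : Sec.aeeq B s s')
    (ht : Sec.aeeq B t t') : Sec.aeeq B (s.add t) (s'.add t') :=
  fun n => by filter_upwards [hs n, ht n] with x h₁ h₂ hn; simp only [Sec.add, h₁ hn, h₂ hn]

theorem Sec.measurable_val_apply {B : MBB X μ} (s : Sec B) (n : ℕ) (i : Fin n) :
    Measurable fun x => s.val n x i :=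
  (measurable_pi_apply i).comp (s.meas n)

theorem ptNorm_eq_nrm (B : MBB X μ) (s : Sec B) {n : ℕ} {x : X} (hx : x ∈ B.E n) :
    ptNorm B s x = B.nrm n x (s.val n x) := by
  rw [ptNorm, tsum_eq_single n fun k hk => Set.indicator_of_notMem
    (fun hxk => Set.disjoint_left.mp (B.disjE k n hk) hxk hx) _, Set.indicator_of_mem hx]

theorem Sec.val_eq_lincomb_constSec {B : MBB X μ} (s : Sec B) {n k : ℕ} {x : X}
    (hx : x ∈ B.E n ∩ B.E k) :
    s.val k x = (lincomb (fun i x => s.val n x i) (s.measurable_val_apply n)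
      fun i => constSec B n (Pi.single i 1)).val k x := by
  obtain rfl : k = n := by
    by_contra hkn
    exact Set.disjoint_left.mp (B.disjE k n hkn) hx.2 hx.1
  funext j
  simp [lincomb, constSec, Pi.single_apply]

theorem lincomb_succ {B : MBB X μ} {k : ℕ} (g : Fin (k + 1) → X → ℝ)
    (hg : ∀ i, Measurable (g i)) (u : Fin (k + 1) → Sec B) :
    lincomb g hg u = (lincomb (fun i => g i.castSucc) (fun _ => hg _) fun i => u i.castSucc).add
      (Sec.smul (g (Fin.last k)) (hg _) (u (Fin.last k))) := by
  simp only [lincomb, Sec.add, Sec.smul, Fin.sum_univ_castSucc]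

structure IsL0Linear {B₁ B₂ : MBB X μ} (Φ : Sec B₁ → Sec B₂) : Prop where
  congr : ∀ s t : Sec B₁, Sec.aeeq B₁ s t → Sec.aeeq B₂ (Φ s) (Φ t)
  map_add : ∀ s t : Sec B₁, Sec.aeeq B₂ (Φ (Sec.add s t)) (Sec.add (Φ s) (Φ t))
  map_smul : ∀ (g : X → ℝ) (hg : Measurable g) (s : Sec B₁),
    Sec.aeeq B₂ (Φ (Sec.smul g hg s)) (Sec.smul g hg (Φ s))

def fiberMap {B₁ B₂ : MBB X μ} (Φ : Sec B₁ → Sec B₂) (n m : ℕ) (x : X) :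
    (Fin n → ℝ) →ₗ[ℝ] (Fin m → ℝ) :=
  Fintype.linearCombination ℝ fun i => (Φ (constSec B₁ n (Pi.single i 1))).val m x

theorem measurable_fiberMap {B₁ B₂ : MBB X μ} (Φ : Sec B₁ → Sec B₂) (n m : ℕ) :
    Measurable fun p : X × (Fin n → ℝ) => fiberMap Φ n m p.1 p.2 := by
  simp only [fiberMap, Fintype.linearCombination_apply]
  exact Finset.measurable_sum _ fun i _ =>
    ((measurable_pi_apply i).comp measurable_snd).smul (((Φ _).meas m).comp measurable_fst)

namespace IsL0Linear

variable {B₁ B₂ : MBB X μ} {Φ : Sec B₁ → Sec B₂}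

theorem map_lincomb (hΦ : IsL0Linear Φ) {k : ℕ} (g : Fin k → X → ℝ)
    (hg : ∀ i, Measurable (g i)) (u : Fin k → Sec B₁) :
    Sec.aeeq B₂ (Φ (lincomb g hg u)) (lincomb g hg fun i => Φ (u i)) := by
  induction k with
  | zero =>
    have hzero : Sec.aeeq B₁ (lincomb g hg u)
        (Sec.smul (fun _ => 0) measurable_const (lincomb g hg u)) :=
      Sec.aeeq_of_forall fun n x => by funext j; simp [lincomb, Sec.smul]
    refine ((hΦ.congr _ _ hzero).trans (hΦ.map_smul _ _ _)).trans ?_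
    exact Sec.aeeq_of_forall fun n x => by funext j; simp [lincomb, Sec.smul]
  | succ k ih =>
    rw [lincomb_succ, lincomb_succ]
    exact (hΦ.map_add _ _).trans ((ih _ _ _).add (hΦ.map_smul _ _ _))

theorem ae_eq_of_eqOn (hΦ : IsL0Linear Φ) {A : Set X} (hA : MeasurableSet A) {s t : Sec B₁}
    (hst : ∀ k, ∀ x ∈ A ∩ B₁.E k, s.val k x = t.val k x) (m : ℕ) :
    ∀ᵐ x ∂μ, x ∈ A ∩ B₂.E m → (Φ s).val m x = (Φ t).val m x := by
  have h1A : Measurable (A.indicator fun _ => (1 : ℝ)) := measurable_const.indicator hA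
  have hloc : Sec.aeeq B₁ (Sec.smul _ h1A s) (Sec.smul _ h1A t) := by
    refine fun k => ae_of_all _ fun x hxk => funext fun j => ?_
    by_cases hxA : x ∈ A
    · simp [Sec.smul, hxA, hst k x ⟨hxA, hxk⟩]
    · simp [Sec.smul, hxA]
  filter_upwards [((hΦ.map_smul _ h1A s).symm.trans
    ((hΦ.congr _ _ hloc).trans (hΦ.map_smul _ h1A t))) m] with x hx hxm
  simpa [Sec.smul, hxm.1] using hx hxm.2

theorem ae_val_eq_fiberMap (hΦ : IsL0Linear Φ) (s : Sec B₁) (n m : ℕ) :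
    ∀ᵐ x ∂μ, x ∈ B₁.E n ∩ B₂.E m → (Φ s).val m x = fiberMap Φ n m x (s.val n x) := by
  have hlocal := hΦ.ae_eq_of_eqOn (B₁.measE n)
    (fun k x hx => s.val_eq_lincomb_constSec hx) m
  filter_upwards [hlocal, hΦ.map_lincomb _ (s.measurable_val_apply n) _ m] with x h₁ h₂ hx
  rw [h₁ hx, h₂ hx.2]
  funext j
  simp [lincomb, fiberMap, Fintype.linearCombination_apply, Finset.sum_apply]

theorem ae_nrm_fiberMap_le (hΦ : IsL0Linear Φ)
    (hnorm : ∀ s : Sec B₁, ∀ᵐ x ∂μ, ptNorm B₂ (Φ s) x ≤ ptNorm B₁ s x) (n m : ℕ) :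
    ∀ᵐ x ∂μ, x ∈ B₁.E n ∩ B₂.E m → ∀ v, B₂.nrm m x (fiberMap Φ n m x v) ≤ B₁.nrm n x v := by
  refine B₁.ae_nrm_le_of_forall_rat B₂ (fiberMap Φ n m) fun r => ?_
  let q : Sec B₁ := constSec B₁ n fun i => r i
  have hq : q.val n = fun _ i => (r i : ℝ) := by funext x i; simp [q, constSec]
  filter_upwards [hnorm q, hΦ.ae_val_eq_fiberMap q n m] with x hle hval hx
  rwa [ptNorm_eq_nrm B₂ _ hx.2, ptNorm_eq_nrm B₁ _ hx.1, hval hx, hq] at hle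

end IsL0Linear

theorem section_functor_full_general
    {X : Type*} [MeasurableSpace X] (μ : Measure X)
    (B₁ B₂ : MBB X μ) (Φ : Sec B₁ → Sec B₂)
    (hwd : ∀ s t : Sec B₁, Sec.aeeq B₁ s t → Sec.aeeq B₂ (Φ s) (Φ t))
    (hadd : ∀ s t : Sec B₁, Sec.aeeq B₂ (Φ (Sec.add s t)) (Sec.add (Φ s) (Φ t)))
    (hsmul : ∀ (g : X → ℝ) (hg : Measurable g) (s : Sec B₁),
      Sec.aeeq B₂ (Φ (Sec.smul g hg s)) (Sec.smul g hg (Φ s)))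
    (hnorm : ∀ s : Sec B₁, ∀ᵐ x ∂μ, ptNorm B₂ (Φ s) x ≤ ptNorm B₁ s x) :
    ∃ φ : MBBHom B₁ B₂, ∀ s : Sec B₁, Represents φ s (Φ s) := by
  have hΦ : IsL0Linear Φ := ⟨hwd, hadd, hsmul⟩
  refine ⟨⟨fun n m x => fiberMap Φ n m x, measurable_fiberMap Φ,
    fun n m => ae_of_all _ fun x _ => map_add _, fun n m => ae_of_all _ fun x _ => map_smul _,
    hΦ.ae_nrm_fiberMap_le hnorm⟩, fun s n m => hΦ.ae_val_eq_fiberMap s n m⟩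

/-- **The section functor is full.** Every module morphism `Φ : Γ(T₁) → Γ(T₂)` between
the section modules of two measurable Banach bundles over a metric measure space
`(X,d,m)` — i.e. every map on sections which descends to a.e.-classes, is additive and
`L⁰(m)`-linear up to a.e. equality and satisfies `|Φ(s)| ≤ |s|` `m`-a.e. — is induced by
a morphism of measurable Banach bundles `φ : T₁ → T₂`, in the sense that `φ ∘ s`
represents `Φ(s)` for every section `s`. -/
theorem section_functor_full
    {X : Type*} [MetricSpace X] [CompleteSpace X] [SecondCountableTopology X]
    [MeasurableSpace X] [BorelSpace X]
    (μ : Measure X) [IsLocallyFiniteMeasure μ] (hμ : μ ≠ 0)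
    (B₁ B₂ : MBB X μ) (Φ : Sec B₁ → Sec B₂)
    (hwd : ∀ s t : Sec B₁, Sec.aeeq B₁ s t → Sec.aeeq B₂ (Φ s) (Φ t))
    (hadd : ∀ s t : Sec B₁, Sec.aeeq B₂ (Φ (Sec.add s t)) (Sec.add (Φ s) (Φ t)))
    (hsmul : ∀ (g : X → ℝ) (hg : Measurable g) (s : Sec B₁),
      Sec.aeeq B₂ (Φ (Sec.smul g hg s)) (Sec.smul g hg (Φ s)))
    (hnorm : ∀ s : Sec B₁, ∀ᵐ x ∂μ, ptNorm B₂ (Φ s) x ≤ ptNorm B₁ s x) :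
    ∃ φ : MBBHom B₁ B₂, ∀ s : Sec B₁, Represents φ s (Φ s) :=
  section_functor_full_general μ B₁ B₂ Φ hwd hadd hsmul hnorm

end L0SerreSwan
end

section
/- A measurable Banach bundle T over X is a measurable Hilbert bundle (i.e. the fiber norm n(x,·) is induced by a scalar product for m-a.e. x) if and only if the section module Γ(T) satisfies the pointwise parallelogram rule |s_1+s_2|² + |s_1−s_2|² = 2|s_1|² + 2|s_2|² m-a.e. for all sections s_1, s_2. -/
open MeasureTheory Filter

namespace L0SerreSwan

variable {X : Type*} [MeasurableSpace X] {μ : MeasureTheory.Measure X}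

/-- On `E n`, the pointwise norm of a section reduces to the fiber norm at `n`. -/
lemma ptNorm_eq_on {B : MBB X μ} (s : Sec B) {n : ℕ} {x : X} (hx : x ∈ B.E n) :
    ptNorm B s x = B.nrm n x (s.val n x) := by
  unfold ptNorm
  rw [tsum_eq_single n]
  · exact Set.indicator_of_mem hx _
  · intro m hm
    exact Set.indicator_of_notMem
      (Set.disjoint_left.mp (B.disjE n m (Ne.symm hm)) hx) _

/-- A function satisfying absolute homogeneity and the triangle inequality on
`Fin n → ℝ` is continuous. -/
lemma continuous_of_norm_axioms {n : ℕ} (N : (Fin n → ℝ) → ℝ)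
    (hs : ∀ (c : ℝ) v, N (c • v) = |c| * N v)
    (ht : ∀ v w, N (v + w) ≤ N v + N w) : Continuous N := by
  have h0 : N 0 = 0 := by
    have := hs 0 0
    simpa using this
  have hsum : ∀ (S : Finset (Fin n)) (f : Fin n → Fin n → ℝ),
      N (∑ i ∈ S, f i) ≤ ∑ i ∈ S, N (f i) := by
    intro S f
    induction S using Finset.cons_induction with
    | empty => simp [h0]
    | cons a S ha ih =>
      rw [Finset.sum_cons, Finset.sum_cons]
      exact le_trans (ht _ _) (add_le_add le_rfl ih)
  have hsingle : ∀ (v : Fin n → ℝ) (i : Fin n),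
      N (Pi.single i (v i)) = |v i| * N (Pi.single i 1) := by
    intro v i
    have : Pi.single i (v i) = (v i) • (Pi.single i (1 : ℝ) : Fin n → ℝ) := by
      funext j
      by_cases h : j = i
      · subst h; simp
      · simp [Pi.single_apply, Ne.symm h, h]
    rw [this, hs]
  have hb : ∀ v : Fin n → ℝ, N v ≤ ∑ i, |v i| * N (Pi.single i 1) := by
    intro v
    have hv : v = ∑ i, Pi.single i (v i) := by
      funext j; simp
    calc N v = N (∑ i, Pi.single i (v i)) := by rw [← hv]
      _ ≤ ∑ i, N (Pi.single i (v i)) := hsum _ _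
      _ = ∑ i, |v i| * N (Pi.single i 1) := by
          exact Finset.sum_congr rfl fun i _ => hsingle v i
  have hneg : ∀ v, N (-v) = N v := by
    intro v
    have := hs (-1) v
    simpa using this
  have habs : ∀ v u : Fin n → ℝ, |N v - N u| ≤ ∑ i, |v i - u i| * N (Pi.single i 1) := by
    intro v u
    have h1 : N v - N u ≤ N (v - u) := by
      have := ht u (v - u)
      simp only [add_sub_cancel] at this
      linarith
    have h2 : N u - N v ≤ N (v - u) := by
      have := ht v (u - v)
      simp only [add_sub_cancel] at this
      have hnn : N (u - v) = N (v - u) := by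
        rw [show u - v = -(v - u) by ring, hneg]
      linarith [hnn ▸ this]
    have h3 : |N v - N u| ≤ N (v - u) := abs_sub_le_iff.mpr ⟨h1, h2⟩
    calc |N v - N u| ≤ N (v - u) := h3
      _ ≤ ∑ i, |(v - u) i| * N (Pi.single i 1) := hb _
      _ = ∑ i, |v i - u i| * N (Pi.single i 1) := rfl
  rw [continuous_iff_continuousAt]
  intro u
  have hg : Continuous fun v : Fin n → ℝ => ∑ i, |v i - u i| * N (Pi.single i 1) := by
    apply continuous_finset_sum
    intro i _
    exact (((continuous_apply i).sub continuous_const).abs).mul continuous_const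
  have hg0 : Filter.Tendsto (fun v : Fin n → ℝ => ∑ i, |v i - u i| * N (Pi.single i 1))
      (nhds u) (nhds 0) := by
    have := hg.tendsto u
    simpa using this
  rw [ContinuousAt, tendsto_iff_dist_tendsto_zero]
  apply squeeze_zero (fun v => dist_nonneg) (fun v => ?_) hg0
  rw [Real.dist_eq]
  exact habs v u

/-- Rational vectors are dense. -/
lemma denseRange_ratCast_pi (n : ℕ) :
    DenseRange (fun q : Fin n → ℚ => (fun i => (q i : ℝ) : Fin n → ℝ)) := by
  have : Set.range (fun q : Fin n → ℚ => (fun i => (q i : ℝ) : Fin n → ℝ)) =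
      Set.pi Set.univ (fun _ : Fin n => Set.range ((↑) : ℚ → ℝ)) := by
    ext f
    constructor
    · rintro ⟨q, rfl⟩ i _
      exact ⟨q i, rfl⟩
    · intro hf
      choose q hq using fun i => hf i (Set.mem_univ i)
      exact ⟨q, funext hq⟩
  unfold DenseRange
  rw [this]
  exact dense_pi Set.univ fun i _ => Rat.denseRange_cast

/-- **Hilbert bundles correspond to Hilbert modules.** A measurable Banach bundle `T`
over a metric measure space `(X,d,m)` is a measurable Hilbert bundle — i.e. for `m`-a.e.
`x` the fiber norm satisfies the parallelogram identity, equivalently it is induced by a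
scalar product — if and only if the section module `Γ(T)` satisfies the pointwise
parallelogram rule `|s₁+s₂|² + |s₁-s₂|² = 2|s₁|² + 2|s₂|²` `m`-a.e. for all sections. -/
theorem hilbert_bundle_iff_hilbert_module
    {X : Type*} [MetricSpace X] [CompleteSpace X] [SecondCountableTopology X]
    [MeasurableSpace X] [BorelSpace X]
    (μ : Measure X) [IsLocallyFiniteMeasure μ] (hμ : μ ≠ 0)
    (B : MBB X μ) :
    (∀ n, ∀ᵐ x ∂μ, x ∈ B.E n → ∀ v w : Fin n → ℝ,
      B.nrm n x (v + w) ^ 2 + B.nrm n x (v - w) ^ 2 =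
        2 * B.nrm n x v ^ 2 + 2 * B.nrm n x w ^ 2) ↔
    (∀ s t : Sec B, ∀ᵐ x ∂μ,
      ptNorm B (Sec.add s t) x ^ 2 + ptNorm B (Sec.sub s t) x ^ 2 =
        2 * ptNorm B s x ^ 2 + 2 * ptNorm B t x ^ 2) := by
  constructor
  · -- fiberwise parallelogram ⟹ module parallelogram
    intro h s t
    have H : ∀ᵐ x ∂μ, ∀ n, x ∈ B.E n → ∀ v w : Fin n → ℝ,
        B.nrm n x (v + w) ^ 2 + B.nrm n x (v - w) ^ 2 =
          2 * B.nrm n x v ^ 2 + 2 * B.nrm n x w ^ 2 := ae_all_iff.mpr h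
    filter_upwards [H] with x hx
    obtain ⟨n, hn⟩ : ∃ n, x ∈ B.E n := by
      have : x ∈ ⋃ n, B.E n := B.unionE ▸ Set.mem_univ x
      exact Set.mem_iUnion.mp this
    rw [ptNorm_eq_on _ hn, ptNorm_eq_on _ hn, ptNorm_eq_on s hn, ptNorm_eq_on t hn]
    have hadd : (Sec.add s t).val n x = s.val n x + t.val n x := rfl
    have hsub : (Sec.sub s t).val n x = s.val n x - t.val n x := rfl
    rw [hadd, hsub]
    exact hx n hn (s.val n x) (t.val n x)
  · -- module parallelogram ⟹ fiberwise parallelogram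
    intro h n
    have hQ : ∀ᵐ x ∂μ, ∀ p : (Fin n → ℚ) × (Fin n → ℚ),
        ptNorm B (Sec.add (constSec B n (fun i => (p.1 i : ℝ)))
            (constSec B n (fun i => (p.2 i : ℝ)))) x ^ 2 +
          ptNorm B (Sec.sub (constSec B n (fun i => (p.1 i : ℝ)))
            (constSec B n (fun i => (p.2 i : ℝ)))) x ^ 2 =
          2 * ptNorm B (constSec B n (fun i => (p.1 i : ℝ))) x ^ 2 +
          2 * ptNorm B (constSec B n (fun i => (p.2 i : ℝ))) x ^ 2 :=
      ae_all_iff.mpr fun p => h _ _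
    filter_upwards [hQ, B.nrm_smul n, B.nrm_triangle n] with x hx hsm htr hxE
    intro v w
    set N : (Fin n → ℝ) → ℝ := B.nrm n x with hN
    have hcont : Continuous N := continuous_of_norm_axioms N (hsm hxE) (htr hxE)
    have hval : ∀ q : Fin n → ℝ, (constSec B n q).val n x = q := by
      intro q
      funext i
      simp [constSec]
    have hrat : ∀ q r : Fin n → ℝ,
        N (q + r) ^ 2 + N (q - r) ^ 2 = 2 * N q ^ 2 + 2 * N r ^ 2 →
        True := fun _ _ _ => trivial
    -- the closed set of pairs satisfying the parallelogram identity
    set S : Set ((Fin n → ℝ) × (Fin n → ℝ)) :=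
      {p | N (p.1 + p.2) ^ 2 + N (p.1 - p.2) ^ 2 = 2 * N p.1 ^ 2 + 2 * N p.2 ^ 2} with hS
    have hSclosed : IsClosed S := by
      have hc1 : Continuous fun p : (Fin n → ℝ) × (Fin n → ℝ) =>
          N (p.1 + p.2) ^ 2 + N (p.1 - p.2) ^ 2 := by
        apply Continuous.add
        · exact (hcont.comp (continuous_fst.add continuous_snd)).pow 2
        · exact (hcont.comp (continuous_fst.sub continuous_snd)).pow 2
      have hc2 : Continuous fun p : (Fin n → ℝ) × (Fin n → ℝ) =>
          2 * N p.1 ^ 2 + 2 * N p.2 ^ 2 := by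
        apply Continuous.add
        · exact continuous_const.mul ((hcont.comp continuous_fst).pow 2)
        · exact continuous_const.mul ((hcont.comp continuous_snd).pow 2)
      exact isClosed_eq hc1 hc2
    have hmem : ∀ p : (Fin n → ℚ) × (Fin n → ℚ),
        ((fun i => (p.1 i : ℝ)), (fun i => (p.2 i : ℝ))) ∈ S := by
      intro p
      have := hx p
      rw [ptNorm_eq_on _ hxE, ptNorm_eq_on _ hxE, ptNorm_eq_on _ hxE, ptNorm_eq_on _ hxE]
        at this
      have hav : (Sec.add (constSec B n (fun i => (p.1 i : ℝ)))
          (constSec B n (fun i => (p.2 i : ℝ)))).val n x =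
          (fun i => (p.1 i : ℝ)) + (fun i => (p.2 i : ℝ)) := by
        funext i
        simp [Sec.add, constSec]
      have hsv : (Sec.sub (constSec B n (fun i => (p.1 i : ℝ)))
          (constSec B n (fun i => (p.2 i : ℝ)))).val n x =
          (fun i => (p.1 i : ℝ)) - (fun i => (p.2 i : ℝ)) := by
        funext i
        simp [Sec.sub, constSec]
      rw [hav, hsv, hval, hval] at this
      exact this
    have hdense : DenseRange (fun p : (Fin n → ℚ) × (Fin n → ℚ) =>
        ((fun i => (p.1 i : ℝ) : Fin n → ℝ), (fun i => (p.2 i : ℝ) : Fin n → ℝ))) :=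
      (denseRange_ratCast_pi n).prodMap (denseRange_ratCast_pi n)
    have hSuniv : ∀ p : (Fin n → ℝ) × (Fin n → ℝ), p ∈ S := by
      intro p
      have h1 : p ∈ closure (Set.range (fun p : (Fin n → ℚ) × (Fin n → ℚ) =>
          ((fun i => (p.1 i : ℝ) : Fin n → ℝ), (fun i => (p.2 i : ℝ) : Fin n → ℝ)))) :=
        hdense p
      have h2 : Set.range (fun p : (Fin n → ℚ) × (Fin n → ℚ) =>
          ((fun i => (p.1 i : ℝ) : Fin n → ℝ), (fun i => (p.2 i : ℝ) : Fin n → ℝ))) ⊆ S :=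
        Set.range_subset_iff.mpr hmem
      have := closure_mono h2 h1
      rwa [hSclosed.closure_eq] at this
    exact hSuniv ⟨v, w⟩

end L0SerreSwan
end
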